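/- arXiv:2502.15584 — 8 statements merged into one kernel-verified Lean document; each statement's English description precedes it below -/
import Mathlib

section
/- Let s ≥ 1 be an integer, μ ∈ ℝ, σ > 0, and let y_1,…,y_s be independent real Gaussian random variables each distributed N(μ, σ²). For every a with 0 < a < |μ|, P(min_{1≤i≤s} |y_i| > a) ≤ exp{ −(s/2) · ( e^{−2σ^{-2}(|μ|−a)²/π} − e^{−σ^{-2}(a+|μ|)²/2} ) / ( (1 − e^{−2σ^{-2}(|μ|−a)²/π})^{1/2} + (1 − e^{−σ^{-2}(a+|μ|)²/2})^{1/2} ) }. (Lemma S2.2(iii): upper bound on the probability that the minimum of i.i.d. folded Gaussians exceeds a level below the mean magnitude.) -/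
/-!
Put `G(δ) = ∫₀^δ e^{-t²/2} dt`. Chu's bounds on `G` come from comparing
`(2G(δ))² = ∬ e^{-(x²+y²)/2}` over the square `(-δ, δ]²` with the integral
`2π(1 - e^{-r²/2})` over the disk of radius `r` (polar coordinates): the inscribed disk `r = δ`
gives the lower bound, and the disk of the same area, `r = 2δ/√π`, the upper bound, because the
integrand is radially decreasing.

For `y ~ N(m, σ²)` and `a ≥ 0`, `P(|y| ≤ a) = (G((a + |m|)/σ) - G((|m| - a)/σ)) / √(2π)`, which
Chu's bounds estimate from below by
`c = (√(1 - e^{-(a+|m|)²/(2σ²)}) - √(1 - e^{-2(|m|-a)²/(πσ²)}))/2`.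
Hence `P(|y| > a) ≤ 1 - c ≤ e^{-c}`, independence raises this to the power `s`, and the exponent
`-s c` is the stated one after `(u - v)/(√u + √v) = √u - √v`.
-/

open MeasureTheory ProbabilityTheory Real Set

lemma setIntegral_le_setIntegral_of_measure_eq {α : Type*} [MeasurableSpace α] {μ : Measure α}
    {f : α → ℝ} {S D : Set α} (c : ℝ) (hf : IntegrableOn f (S ∪ D) μ) (hS : MeasurableSet S)
    (hD : MeasurableSet D) (hμ : μ S = μ D) (hfin : μ S ≠ ⊤)
    (hout : ∀ x ∈ S \ D, f x ≤ c) (hin : ∀ x ∈ D \ S, c ≤ f x) :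
    ∫ x in S, f x ∂μ ≤ ∫ x in D, f x ∂μ := by
  have hfinD : μ D ≠ ⊤ := hμ ▸ hfin
  have hdiff : μ.real (S \ D) = μ.real (D \ S) := by
    rw [measureReal_def, measureReal_def, measure_sdiff_symm hS.nullMeasurableSet
      hD.nullMeasurableSet hμ (measure_ne_top_of_subset inter_subset_left hfin)]
  have hSD : ∫ x in S \ D, f x ∂μ ≤ c * μ.real (S \ D) := by
    rw [mul_comm, ← smul_eq_mul, ← setIntegral_const]
    exact setIntegral_mono_on (hf.mono_set (sdiff_subset.trans subset_union_left))
      (integrableOn_const (measure_ne_top_of_subset sdiff_subset hfin)) (hS.diff hD) hout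
  have hDS : c * μ.real (D \ S) ≤ ∫ x in D \ S, f x ∂μ :=
    setIntegral_ge_of_const_le_real (hD.diff hS) (measure_ne_top_of_subset sdiff_subset hfinD)
      hin (hf.mono_set (sdiff_subset.trans subset_union_right))
  have hsplitS := integral_inter_add_sdiff hD (hf.mono_set subset_union_left)
  have hsplitD := integral_inter_add_sdiff hS (hf.mono_set subset_union_right)
  rw [inter_comm] at hsplitD
  rw [hdiff] at hSD
  linarith

namespace Chu

def disk (r : ℝ) : Set (ℝ × ℝ) := {p | p.1 ^ 2 + p.2 ^ 2 < r ^ 2}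

def square (δ : ℝ) : Set (ℝ × ℝ) := Ioc (-δ) δ ×ˢ Ioc (-δ) δ

lemma measurableSet_disk (r : ℝ) : MeasurableSet (disk r) :=
  measurableSet_lt (by fun_prop) measurable_const

lemma measurableSet_square (δ : ℝ) : MeasurableSet (square δ) :=
  measurableSet_Ioc.prod measurableSet_Ioc

lemma polarCoord_symm_sq_add_sq (p : ℝ × ℝ) :
    (polarCoord.symm p).1 ^ 2 + (polarCoord.symm p).2 ^ 2 = p.1 ^ 2 := by
  simp only [polarCoord_symm_apply]
  linear_combination p.1 ^ 2 * cos_sq_add_sin_sq p.2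

lemma setIntegral_disk_radial {r : ℝ} (hr : 0 ≤ r) (g : ℝ → ℝ) :
    ∫ p in disk r, g (p.1 ^ 2 + p.2 ^ 2) = 2 * π * ∫ ρ in (0 : ℝ)..r, ρ * g (ρ ^ 2) := by
  rw [← integral_indicator (measurableSet_disk r), ← integral_comp_polarCoord_symm]
  have hpolar : ∀ p ∈ polarCoord.target,
      p.1 • (disk r).indicator (fun q => g (q.1 ^ 2 + q.2 ^ 2)) (polarCoord.symm p)
        = (Ioo 0 r).indicator (fun ρ => ρ * g (ρ ^ 2)) p.1 * (fun _ : ℝ => (1 : ℝ)) p.2 := by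
    rintro ⟨ρ, θ⟩ ⟨hρ, -⟩
    have hρ : 0 < ρ := hρ
    have hdisk : polarCoord.symm (ρ, θ) ∈ disk r ↔ ρ ∈ Ioo 0 r := by
      rw [disk, mem_ofPred, polarCoord_symm_sq_add_sq, pow_lt_pow_iff_left₀ hρ.le hr two_ne_zero]
      exact ⟨fun h => ⟨hρ, h⟩, And.right⟩
    by_cases h : ρ ∈ Ioo 0 r
    · rw [indicator_of_mem h, indicator_of_mem (hdisk.mpr h), polarCoord_symm_sq_add_sq,
        smul_eq_mul, mul_one]
    · rw [indicator_of_notMem h, indicator_of_notMem (mt hdisk.mp h), smul_zero, zero_mul]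
  rw [setIntegral_congr_fun polarCoord.open_target.measurableSet hpolar, polarCoord_target,
    Measure.volume_eq_prod,
    setIntegral_prod_mul ((Ioo 0 r).indicator fun ρ => ρ * g (ρ ^ 2)) fun _ => (1 : ℝ),
    integral_indicator measurableSet_Ioo,
    Measure.restrict_restrict measurableSet_Ioo, inter_eq_left.mpr Ioo_subset_Ioi_self,
    setIntegral_const, measureReal_def, Real.volume_Ioo, intervalIntegral.integral_of_le hr,
    integral_Ioc_eq_integral_Ioo, ENNReal.toReal_ofReal (by linarith [pi_pos])]
  simp only [smul_eq_mul]
  ring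

lemma setIntegral_disk_exp {r : ℝ} (hr : 0 ≤ r) :
    ∫ p in disk r, exp (-(p.1 ^ 2 + p.2 ^ 2) / 2) = 2 * π * (1 - exp (-r ^ 2 / 2)) := by
  have hderiv : ∀ ρ ∈ uIcc 0 r,
      HasDerivAt (fun x => -exp (-x ^ 2 / 2)) (ρ * exp (-ρ ^ 2 / 2)) ρ := fun ρ _ =>
    ((((hasDerivAt_pow 2 ρ).neg).div_const 2).exp).neg.congr_deriv
      (by simp only [Pi.neg_apply]; push_cast; ring)
  rw [setIntegral_disk_radial hr fun t => exp (-t / 2),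
    intervalIntegral.integral_eq_sub_of_hasDerivAt hderiv
      (Continuous.intervalIntegrable (by fun_prop) _ _)]
  norm_num
  ring

lemma volume_square {δ : ℝ} (hδ : 0 ≤ δ) : volume (square δ) = ENNReal.ofReal (4 * δ ^ 2) := by
  rw [square, Measure.volume_eq_prod, Measure.prod_prod, Real.volume_Ioc,
    ← ENNReal.ofReal_mul (by linarith)]
  ring_nf

lemma disk_subset_square {δ : ℝ} (hδ : 0 ≤ δ) : disk δ ⊆ square δ := by
  rintro ⟨x, y⟩ h
  replace h : x ^ 2 + y ^ 2 < δ ^ 2 := h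
  have hx : |x| < δ := abs_lt_of_sq_lt_sq (by nlinarith [sq_nonneg y, h]) hδ
  have hy : |y| < δ := abs_lt_of_sq_lt_sq (by nlinarith [sq_nonneg x, h]) hδ
  exact ⟨⟨(abs_lt.mp hx).1, (abs_lt.mp hx).2.le⟩, (abs_lt.mp hy).1, (abs_lt.mp hy).2.le⟩

lemma volume_disk {r : ℝ} (hr : 0 ≤ r) : volume (disk r) = ENNReal.ofReal (π * r ^ 2) := by
  have hfin : volume (disk r) ≠ ⊤ := by
    refine ne_top_of_le_ne_top ?_ (measure_mono (disk_subset_square hr))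
    rw [volume_square hr]
    exact ENNReal.ofReal_ne_top
  have hint := setIntegral_disk_radial hr fun _ => (1 : ℝ)
  simp only [setIntegral_const, smul_eq_mul, mul_one, integral_id] at hint
  rw [← ENNReal.ofReal_toReal hfin, ← measureReal_def, hint]
  ring_nf

lemma setIntegral_square_exp {δ : ℝ} (hδ : 0 ≤ δ) :
    ∫ p in square δ, exp (-(p.1 ^ 2 + p.2 ^ 2) / 2) = (∫ t in -δ..δ, exp (-t ^ 2 / 2)) ^ 2 := by
  have hsplit : ∀ p : ℝ × ℝ,
      exp (-(p.1 ^ 2 + p.2 ^ 2) / 2) = exp (-p.1 ^ 2 / 2) * exp (-p.2 ^ 2 / 2) :=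
    fun p => by rw [← exp_add]; ring_nf
  simp_rw [hsplit]
  rw [square, Measure.volume_eq_prod,
    setIntegral_prod_mul (fun x => exp (-x ^ 2 / 2)) fun x => exp (-x ^ 2 / 2),
    intervalIntegral.integral_of_le (by linarith), sq]

lemma integrable_exp_neg_sq_add_sq :
    Integrable (fun p : ℝ × ℝ => exp (-(p.1 ^ 2 + p.2 ^ 2) / 2)) := by
  have h : Integrable (fun x : ℝ => exp (-x ^ 2 / 2)) := by
    simpa [div_eq_inv_mul] using integrable_exp_neg_mul_sq (b := 1 / 2) (by norm_num)
  rw [Measure.volume_eq_prod]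
  refine (h.mul_prod h).congr (Filter.Eventually.of_forall fun p => ?_)
  simp only [← exp_add]
  ring_nf

lemma sq_integral_exp_ge {δ : ℝ} (hδ : 0 ≤ δ) :
    2 * π * (1 - exp (-δ ^ 2 / 2)) ≤ (∫ t in -δ..δ, exp (-t ^ 2 / 2)) ^ 2 := by
  rw [← setIntegral_disk_exp hδ, ← setIntegral_square_exp hδ]
  exact setIntegral_mono_set integrable_exp_neg_sq_add_sq.integrableOn
    (Filter.Eventually.of_forall fun _ => (exp_pos _).le) (disk_subset_square hδ).eventuallyLE

lemma sq_integral_exp_le {δ : ℝ} (hδ : 0 ≤ δ) :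
    (∫ t in -δ..δ, exp (-t ^ 2 / 2)) ^ 2 ≤ 2 * π * (1 - exp (-(2 * δ ^ 2) / π)) := by
  set r := 2 * δ / √π
  have hr : 0 ≤ r := by positivity
  have hr2 : r ^ 2 = 4 * δ ^ 2 / π := by
    rw [div_pow, sq_sqrt pi_pos.le]
    ring
  have hvol : volume (square δ) = volume (disk r) := by
    rw [volume_square hδ, volume_disk hr, hr2, mul_div_cancel₀ _ pi_pos.ne']
  have hexp : -(2 * δ ^ 2) / π = -r ^ 2 / 2 := by
    rw [hr2]
    ring
  rw [← setIntegral_square_exp hδ, hexp, ← setIntegral_disk_exp hr]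
  refine setIntegral_le_setIntegral_of_measure_eq (exp (-r ^ 2 / 2))
    integrable_exp_neg_sq_add_sq.integrableOn (measurableSet_square δ) (measurableSet_disk r) hvol
    (by rw [volume_square hδ]; exact ENNReal.ofReal_ne_top) ?_ ?_
  · rintro p ⟨-, hp⟩
    replace hp : r ^ 2 ≤ p.1 ^ 2 + p.2 ^ 2 := not_lt.mp hp
    gcongr
  · rintro p ⟨hp, -⟩
    replace hp : p.1 ^ 2 + p.2 ^ 2 < r ^ 2 := hp
    gcongr

lemma integral_exp_neg_sq_neg_neg (a b : ℝ) :
    ∫ t in -b..-a, exp (-t ^ 2 / 2) = ∫ t in a..b, exp (-t ^ 2 / 2) := by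
  simp [← intervalIntegral.integral_comp_neg fun t => exp (-t ^ 2 / 2)]

lemma integral_exp_neg_sq_neg_eq_two_mul (δ : ℝ) :
    ∫ t in -δ..δ, exp (-t ^ 2 / 2) = 2 * ∫ t in 0..δ, exp (-t ^ 2 / 2) := by
  have hcont : Continuous fun t : ℝ => exp (-t ^ 2 / 2) := by fun_prop
  have hreflect : ∫ t in -δ..0, exp (-t ^ 2 / 2) = ∫ t in 0..δ, exp (-t ^ 2 / 2) := by
    simpa using integral_exp_neg_sq_neg_neg 0 δ
  rw [← intervalIntegral.integral_add_adjacent_intervals (hcont.intervalIntegrable _ 0)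
    (hcont.intervalIntegrable 0 _), hreflect, two_mul]

lemma lower_bound {δ : ℝ} (hδ : 0 ≤ δ) :
    √(1 - exp (-δ ^ 2 / 2)) / 2 ≤ (√(2 * π))⁻¹ * ∫ t in 0..δ, exp (-t ^ 2 / 2) := by
  have hsq := sq_integral_exp_ge hδ
  rw [integral_exp_neg_sq_neg_eq_two_mul] at hsq
  have hG : 0 ≤ ∫ t in 0..δ, exp (-t ^ 2 / 2) :=
    intervalIntegral.integral_nonneg hδ fun _ _ => (exp_pos _).le
  have h : √(2 * π) * √(1 - exp (-δ ^ 2 / 2)) ≤ 2 * ∫ t in 0..δ, exp (-t ^ 2 / 2) := by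
    rw [← sqrt_mul (by positivity)]
    exact (sqrt_le_left (by positivity)).mpr hsq
  rw [inv_mul_eq_div, le_div_iff₀ (by positivity)]
  linarith

lemma upper_bound (δ : ℝ) :
    (√(2 * π))⁻¹ * ∫ t in 0..δ, exp (-t ^ 2 / 2) ≤ √(1 - exp (-(2 * δ ^ 2) / π)) / 2 := by
  have h : 2 * ∫ t in 0..δ, exp (-t ^ 2 / 2) ≤ √(2 * π) * √(1 - exp (-(2 * δ ^ 2) / π)) := by
    rw [← sqrt_mul (by positivity)]
    rcases le_total 0 δ with hδ | hδ
    · exact le_sqrt_of_sq_le (integral_exp_neg_sq_neg_eq_two_mul δ ▸ sq_integral_exp_le hδ)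
    · have hG : ∫ t in 0..δ, exp (-t ^ 2 / 2) ≤ 0 := by
        rw [intervalIntegral.integral_symm, neg_nonpos]
        exact intervalIntegral.integral_nonneg hδ fun _ _ => (exp_pos _).le
      linarith [sqrt_nonneg (2 * π * (1 - exp (-(2 * δ ^ 2) / π)))]
  rw [inv_mul_eq_div, div_le_iff₀ (by positivity)]
  linarith

end Chu

lemma gaussianReal_real_Icc (m : ℝ) {σ : ℝ} (hσ : 0 < σ) {α β : ℝ} (hαβ : α ≤ β) :
    (gaussianReal m (σ ^ 2).toNNReal).real (Icc α β)
      = (√(2 * π))⁻¹ * ∫ u in (α - m) / σ..(β - m) / σ, exp (-u ^ 2 / 2) := by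
  have hv : (σ ^ 2).toNNReal ≠ 0 := by simp [hσ.ne']
  have hpdf : ∀ x, gaussianPDFReal m (σ ^ 2).toNNReal x
      = (√(2 * π) * σ)⁻¹ * (fun u => exp (-u ^ 2 / 2)) (x / σ - m / σ) := fun x => by
    rw [gaussianPDFReal_def, Real.coe_toNNReal _ (sq_nonneg σ), sqrt_mul (by positivity),
      sqrt_sq hσ.le]
    field_simp
  rw [measureReal_def, gaussianReal_apply_eq_integral m hv,
    ENNReal.toReal_ofReal (setIntegral_nonneg measurableSet_Icc fun x _ =>
      gaussianPDFReal_nonneg _ _ x),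
    integral_Icc_eq_integral_Ioc, ← intervalIntegral.integral_of_le hαβ]
  simp_rw [hpdf]
  rw [intervalIntegral.integral_const_mul,
    intervalIntegral.integral_comp_div_sub (fun u => exp (-u ^ 2 / 2)) hσ.ne', smul_eq_mul,
    sub_div, sub_div, mul_inv, mul_assoc, inv_mul_cancel_left₀ hσ.ne']

lemma gaussianReal_real_abs_le (m : ℝ) {σ : ℝ} (hσ : 0 < σ) {a : ℝ} (ha : 0 ≤ a) :
    (gaussianReal m (σ ^ 2).toNNReal).real {x | |x| ≤ a}
      = (√(2 * π))⁻¹ * ∫ u in (|m| - a) / σ..(a + |m|) / σ, exp (-u ^ 2 / 2) := by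
  have hIcc : {x : ℝ | |x| ≤ a} = Icc (-a) a := by
    ext x
    simp [abs_le]
  rw [hIcc, gaussianReal_real_Icc m hσ (by linarith)]
  rcases abs_choice m with hm | hm <;> rw [hm]
  · rw [← Chu.integral_exp_neg_sq_neg_neg]
    congr 2 <;> ring
  · congr 2
    ring

lemma gaussianReal_real_abs_le_ge (m : ℝ) {σ : ℝ} (hσ : 0 < σ) {a : ℝ} (ha : 0 ≤ a) :
    (√(1 - exp (-((a + |m|) ^ 2) / (2 * σ ^ 2)))
        - √(1 - exp (-(2 * (|m| - a) ^ 2) / (π * σ ^ 2)))) / 2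
      ≤ (gaussianReal m (σ ^ 2).toNNReal).real {x | |x| ≤ a} := by
  have hcont : Continuous fun t : ℝ => exp (-t ^ 2 / 2) := by fun_prop
  have hlower := Chu.lower_bound (δ := (a + |m|) / σ) (by positivity)
  have hupper := Chu.upper_bound ((|m| - a) / σ)
  rw [show -((a + |m|) / σ) ^ 2 / 2 = -((a + |m|) ^ 2) / (2 * σ ^ 2) by field_simp] at hlower
  rw [show -(2 * ((|m| - a) / σ) ^ 2) / π = -(2 * (|m| - a) ^ 2) / (π * σ ^ 2) by field_simp]
    at hupper
  rw [gaussianReal_real_abs_le m hσ ha, ← intervalIntegral.integral_interval_sub_left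
    (hcont.intervalIntegrable 0 _) (hcont.intervalIntegrable 0 _), mul_sub]
  linarith

lemma gaussianReal_real_abs_gt_le (m : ℝ) {σ : ℝ} (hσ : 0 < σ) {a : ℝ} (ha : 0 ≤ a) :
    (gaussianReal m (σ ^ 2).toNNReal).real {x | a < |x|}
      ≤ exp (-((√(1 - exp (-((a + |m|) ^ 2) / (2 * σ ^ 2)))
        - √(1 - exp (-(2 * (|m| - a) ^ 2) / (π * σ ^ 2)))) / 2)) := by
  have hcompl : {x : ℝ | a < |x|} = {x | |x| ≤ a}ᶜ := by
    ext x
    simp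
  rw [hcompl, probReal_compl_eq_one_sub (measurableSet_le (by fun_prop) measurable_const)]
  exact (one_sub_le_exp_neg _).trans (exp_le_exp.mpr (neg_le_neg
    (gaussianReal_real_abs_le_ge m hσ ha)))

lemma measure_forall_mem_eq_pow {Ω ι β : Type*} [MeasurableSpace Ω] [MeasurableSpace β]
    [Fintype ι] {P : Measure Ω} {ν : Measure β} [NeZero ν] {y : ι → Ω → β}
    (hindep : iIndepFun y P) (hlaw : ∀ i, P.map (y i) = ν) {S : Set β} (hS : MeasurableSet S) :
    P {ω | ∀ i, y i ω ∈ S} = ν S ^ Fintype.card ι := by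
  have hpre : ∀ i, P (y i ⁻¹' S) = ν S := fun i => by
    have hy : AEMeasurable (y i) P := .of_map_ne_zero (hlaw i ▸ NeZero.ne ν)
    rw [← hlaw i, Measure.map_apply_of_aemeasurable hy hS]
  rw [show {ω | ∀ i, y i ω ∈ S} = ⋂ i, y i ⁻¹' S by ext; simp,
    hindep.meas_iInter fun i => ⟨S, hS, rfl⟩]
  simp [hpre]

lemma sub_div_sqrt_add_sqrt {u v : ℝ} (hu : 0 ≤ u) (hv : 0 ≤ v) :
    (u - v) / (√u + √v) = √u - √v := by
  rcases eq_or_ne (√u + √v) 0 with h | h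
  · have hu' : √u = 0 := by linarith [sqrt_nonneg u, sqrt_nonneg v]
    have hv' : √v = 0 := by linarith [sqrt_nonneg u, sqrt_nonneg v]
    rw [h, hu', hv', div_zero, sub_zero]
  · rw [div_eq_iff h]
    nlinarith [sq_sqrt hu, sq_sqrt hv]

theorem stmt3_general {Ω : Type*} [MeasurableSpace Ω] (P : Measure Ω)
    (s : ℕ) (m σ : ℝ) (hσ : 0 < σ)
    (y : Fin s → Ω → ℝ)
    (hindep : iIndepFun y P)
    (hlaw : ∀ i, Measure.map (y i) P = gaussianReal m (Real.toNNReal (σ ^ 2)))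
    (a : ℝ) (ha0 : 0 < a) :
    (P {ω | ∀ i, a < |y i ω|}).toReal ≤
      Real.exp (-((s : ℝ) / 2) *
        ((Real.exp (-(2 * (|m| - a) ^ 2) / (Real.pi * σ ^ 2)) -
            Real.exp (-((a + |m|) ^ 2) / (2 * σ ^ 2))) /
          (Real.sqrt (1 - Real.exp (-(2 * (|m| - a) ^ 2) / (Real.pi * σ ^ 2))) +
            Real.sqrt (1 - Real.exp (-((a + |m|) ^ 2) / (2 * σ ^ 2)))))) := by
  set A := exp (-(2 * (|m| - a) ^ 2) / (π * σ ^ 2))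
  set B := exp (-((a + |m|) ^ 2) / (2 * σ ^ 2))
  have hA : A ≤ 1 := exp_le_one_iff.mpr
    (div_nonpos_of_nonpos_of_nonneg (neg_nonpos.mpr (by positivity)) (by positivity))
  have hB : B ≤ 1 := exp_le_one_iff.mpr
    (div_nonpos_of_nonpos_of_nonneg (neg_nonpos.mpr (by positivity)) (by positivity))
  have hprod : P {ω | ∀ i, a < |y i ω|} = _ := measure_forall_mem_eq_pow hindep hlaw
    (measurableSet_lt measurable_const (by fun_prop) : MeasurableSet {x : ℝ | a < |x|})
  have htail := gaussianReal_real_abs_gt_le m hσ ha0.le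
  rw [measureReal_def] at htail
  rw [show A - B = (1 - B) - (1 - A) by ring, add_comm,
    sub_div_sqrt_add_sqrt (by linarith) (by linarith), hprod, ENNReal.toReal_pow,
    Fintype.card_fin, show -((s : ℝ) / 2) * (√(1 - B) - √(1 - A))
      = s * -((√(1 - B) - √(1 - A)) / 2) by ring, exp_nat_mul]
  exact pow_le_pow_left₀ ENNReal.toReal_nonneg htail s

/-- **Lemma S2.2(iii).** Upper bound on the probability that the minimum of `s ≥ 1`
i.i.d. folded Gaussians `|y_i|`, `y_i ~ N(μ, σ²)`, exceeds a level `a` with `0 < a < |μ|`: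
`P(min_i |y_i| > a) ≤ exp{−(s/2)·(e^{−2σ⁻²(|μ|−a)²/π} − e^{−σ⁻²(a+|μ|)²/2}) /
((1 − e^{−2σ⁻²(|μ|−a)²/π})^{1/2} + (1 − e^{−σ⁻²(a+|μ|)²/2})^{1/2})}`. -/
theorem stmt3 {Ω : Type*} [MeasurableSpace Ω] (P : Measure Ω) [IsProbabilityMeasure P]
    (s : ℕ) (hs : 1 ≤ s) (m σ : ℝ) (hσ : 0 < σ)
    (y : Fin s → Ω → ℝ) (hmeas : ∀ i, Measurable (y i))
    (hindep : iIndepFun y P)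
    (hlaw : ∀ i, Measure.map (y i) P = gaussianReal m (Real.toNNReal (σ ^ 2)))
    (a : ℝ) (ha0 : 0 < a) (ham : a < |m|) :
    (P {ω | ∀ i, a < |y i ω|}).toReal ≤
      Real.exp (-((s : ℝ) / 2) *
        ((Real.exp (-(2 * (|m| - a) ^ 2) / (Real.pi * σ ^ 2)) -
            Real.exp (-((a + |m|) ^ 2) / (2 * σ ^ 2))) /
          (Real.sqrt (1 - Real.exp (-(2 * (|m| - a) ^ 2) / (Real.pi * σ ^ 2))) +
            Real.sqrt (1 - Real.exp (-((a + |m|) ^ 2) / (2 * σ ^ 2)))))) :=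
  stmt3_general P s m σ hσ y hindep hlaw a ha0
end

section
/- In the Gaussian sequence model with block structure, assume A1, A2, A3, and Assumption A4: for every j and every sufficiently large n, √n τ_j ≥ √(2 ln(p_j − s_j)). Then P(Ŝ^b ⊆ S) → 1 as n → ∞. (Proposition 3.2(i): no false positives asymptotically.) -/
open MeasureTheory ProbabilityTheory Filter Finset
open scoped NNReal

/-- Number of truly inactive coordinates in block `j` (that is, `p_j − s_j`). -/
noncomputable def inactJ {P b : ℕ} (blk : Fin P → Fin b) (βs : Fin P → ℝ) (j : Fin b) : ℕ :=
  (Finset.univ.filter (fun i => blk i = j ∧ βs i = 0)).card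

/-- Number of truly active coordinates in block `j` (that is, `s_j`). -/
noncomputable def actJ {P b : ℕ} (blk : Fin P → Fin b) (βs : Fin P → ℝ) (j : Fin b) : ℕ :=
  (Finset.univ.filter (fun i => blk i = j ∧ βs i ≠ 0)).card

/-!
A false positive can only come from a null coordinate `i ∈ B_j`, where `β̃_i ~ N(0, 1/n)`.
By the union bound and Mills' inequality `P(|Z| > c) ≤ √(2/π) e^{-c²/2} / c` for a standard
normal `Z`, the probability of a false positive in block `j` is at most
`(p_j − s_j) √(2/π) e^{-c_j²/2} / c_j` with `c_j = √n τ_j ≥ √(2 ln(p_j − s_j))` by A4, hence at most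
`1 / √(π ln(p_j − s_j))`, which tends to `0` by A2. There are finitely many blocks.
-/

open Real
open scoped ENNReal Topology

lemma hasDerivAt_gaussianPDFReal (μ : ℝ) (v : ℝ≥0) (x : ℝ) :
    HasDerivAt (gaussianPDFReal μ v) (-((x - μ) / v) * gaussianPDFReal μ v x) x := by
  have hin : HasDerivAt (fun y => -(y - μ) ^ 2 / (2 * v)) (-((x - μ) / v)) x :=
    ((((hasDerivAt_id' x).sub_const μ).fun_pow 2).fun_neg.div_const (2 * (v : ℝ))).congr_deriv
      (by ring)
  rw [gaussianPDFReal_def]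
  exact (hin.exp.const_mul (√(2 * π * v))⁻¹).congr_deriv (by ring)

lemma tendsto_gaussianPDFReal_atTop (μ : ℝ) (v : ℝ≥0) :
    Tendsto (gaussianPDFReal μ v) atTop (𝓝 0) := by
  rcases eq_or_ne v 0 with rfl | hv
  · rw [gaussianPDFReal_zero_var]; exact tendsto_const_nhds
  have h : Tendsto (fun x : ℝ => -(x - μ) ^ 2 / (2 * v)) atTop atBot := by
    refine Tendsto.atBot_div_const (by positivity) (tendsto_neg_atTop_atBot.comp ?_)
    exact (tendsto_pow_atTop two_ne_zero).comp (tendsto_atTop_add_const_right _ _ tendsto_id)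
  rw [gaussianPDFReal_def]
  simpa only [mul_zero, Function.comp_def] using
    (tendsto_exp_atBot.comp h).const_mul (√(2 * π * v))⁻¹

/-- Mills' inequality: on `(t, ∞)` the density is at most `x / t` times itself, and
`x * gaussianPDFReal 0 v x` is the derivative of `-v * gaussianPDFReal 0 v x`. -/
lemma gaussianReal_Ioi_le {v : ℝ≥0} (hv : v ≠ 0) {t : ℝ} (ht : 0 < t) :
    gaussianReal 0 v (Set.Ioi t) ≤ ENNReal.ofReal (v / t * gaussianPDFReal 0 v t) := by
  have hderiv : ∀ x ∈ Set.Ici t,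
      HasDerivAt (fun y => -(v * gaussianPDFReal 0 v y)) (x * gaussianPDFReal 0 v x) x :=
    fun x _ => (((hasDerivAt_gaussianPDFReal 0 v x).const_mul (v : ℝ)).neg).congr_deriv
      (by rw [sub_zero]; field_simp)
  have hnonneg : ∀ x ∈ Set.Ioi t, 0 ≤ x * gaussianPDFReal 0 v x :=
    fun x hx => mul_nonneg (ht.trans hx).le (gaussianPDFReal_nonneg 0 v x)
  have hlim : Tendsto (fun y => -(v * gaussianPDFReal 0 v y)) atTop (𝓝 0) := by
    simpa using ((tendsto_gaussianPDFReal_atTop 0 v).const_mul (v : ℝ)).neg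
  rw [gaussianReal_apply_eq_integral _ hv]
  refine ENNReal.ofReal_le_ofReal ?_
  calc ∫ x in Set.Ioi t, gaussianPDFReal 0 v x
      ≤ ∫ x in Set.Ioi t, t⁻¹ * (x * gaussianPDFReal 0 v x) := by
        refine setIntegral_mono_on (integrable_gaussianPDFReal 0 v).integrableOn
          ((integrableOn_Ioi_deriv_of_nonneg' hderiv hnonneg hlim).const_mul _)
          measurableSet_Ioi fun x hx => ?_
        rw [← mul_assoc, ← div_eq_inv_mul]
        exact le_mul_of_one_le_left (gaussianPDFReal_nonneg 0 v x) ((one_le_div ht).2 hx.le)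
    _ = v / t * gaussianPDFReal 0 v t := by
        rw [integral_const_mul, integral_Ioi_of_hasDerivAt_of_nonneg' hderiv hnonneg hlim]
        ring

lemma gaussianReal_lt_abs_le {v : ℝ≥0} (hv : v ≠ 0) {t : ℝ} (ht : 0 < t) :
    gaussianReal 0 v {x | t < |x|} ≤ ENNReal.ofReal (2 * (v / t * gaussianPDFReal 0 v t)) := by
  have hsymm : gaussianReal 0 v (Set.Iio (-t)) = gaussianReal 0 v (Set.Ioi t) := by
    conv_lhs => rw [← neg_zero, ← gaussianReal_map_neg]
    rw [Measure.map_apply measurable_neg measurableSet_Iio]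
    congr 1
    ext x
    simp
  have hsplit : {x : ℝ | t < |x|} = Set.Iio (-t) ∪ Set.Ioi t := by
    ext x
    simp [lt_abs, lt_neg, or_comm]
  have hbound := gaussianReal_Ioi_le hv ht
  have hnonneg : 0 ≤ v / t * gaussianPDFReal 0 v t :=
    mul_nonneg (by positivity) (gaussianPDFReal_nonneg 0 v t)
  calc gaussianReal 0 v {x | t < |x|}
      ≤ gaussianReal 0 v (Set.Iio (-t)) + gaussianReal 0 v (Set.Ioi t) := by
        rw [hsplit]; exact measure_union_le _ _
    _ ≤ ENNReal.ofReal (2 * (v / t * gaussianPDFReal 0 v t)) := by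
        rw [hsymm, two_mul, ENNReal.ofReal_add hnonneg hnonneg]
        exact add_le_add hbound hbound

lemma mul_two_mul_div_mul_gaussianPDFReal_le {v : ℝ≥0} {m t : ℝ} (hv : v ≠ 0) (hm : 1 < m)
    (ht : √(2 * log m) ≤ t / √v) :
    m * (2 * (v / t * gaussianPDFReal 0 v t)) ≤ (√(π * log m))⁻¹ := by
  have hv' : (0 : ℝ) < v := by positivity
  have hL : 0 < log m := log_pos hm
  have hst : √v * √(2 * log m) ≤ t := by rwa [le_div_iff₀' (by positivity)] at ht
  have hsq : 2 * v * log m ≤ t ^ 2 := by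
    calc 2 * v * log m = (√v * √(2 * log m)) ^ 2 := by
          rw [mul_pow, sq_sqrt hv'.le, sq_sqrt (by positivity)]; ring
      _ ≤ t ^ 2 := by gcongr
  have hexp : m * exp (-(t - 0) ^ 2 / (2 * v)) ≤ 1 := by
    calc m * exp (-(t - 0) ^ 2 / (2 * v)) ≤ m * exp (-log m) := by
          gcongr
          rw [sub_zero, neg_div, neg_le_neg_iff, le_div_iff₀ (by positivity)]
          linarith
      _ = 1 := by rw [exp_neg, exp_log (by linarith), mul_inv_cancel₀ (by positivity)]
  calc m * (2 * (v / t * gaussianPDFReal 0 v t))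
      = 2 * v / (t * √(2 * π * v)) * (m * exp (-(t - 0) ^ 2 / (2 * v))) := by
        rw [gaussianPDFReal]; field_simp
    _ ≤ 2 * v / (√v * √(2 * log m) * √(2 * π * v)) * 1 := by gcongr
    _ = (√(π * log m))⁻¹ := by
        rw [mul_one, ← sqrt_mul hv'.le, ← sqrt_mul (by positivity),
          show v * (2 * log m) * (2 * π * v) = (2 * v) ^ 2 * (π * log m) by ring,
          sqrt_mul (by positivity), sqrt_sq (by positivity)]
        field_simp

lemma natCast_mul_gaussianReal_lt_abs_le {v : ℝ≥0} (hv : v ≠ 0) {m : ℕ} (hm : 2 ≤ m) {t : ℝ}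
    (ht : √(2 * log m) ≤ t / √v) :
    (m : ℝ≥0∞) * gaussianReal 0 v {x | t < |x|} ≤ ENNReal.ofReal (√(π * log m))⁻¹ := by
  have hm' : (1 : ℝ) < m := by exact_mod_cast hm
  have htpos : 0 < t := by
    have : 0 < t / √v := (sqrt_pos.2 (by linarith [log_pos hm'])).trans_le ht
    exact (div_pos_iff_of_pos_right (by positivity)).1 this
  calc (m : ℝ≥0∞) * gaussianReal 0 v {x | t < |x|}
      ≤ ENNReal.ofReal m * ENNReal.ofReal (2 * (v / t * gaussianPDFReal 0 v t)) := by
        rw [ENNReal.ofReal_natCast]; gcongr; exact gaussianReal_lt_abs_le hv htpos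
    _ ≤ ENNReal.ofReal (√(π * log m))⁻¹ := by
        rw [← ENNReal.ofReal_mul (by positivity)]
        exact ENNReal.ofReal_le_ofReal (mul_two_mul_div_mul_gaussianPDFReal_le hv hm' ht)

lemma tendsto_measure_of_tendsto_measure_compl {Ω : ℕ → Type*} [∀ n, MeasurableSpace (Ω n)]
    {P : (n : ℕ) → Measure (Ω n)} [∀ n, IsProbabilityMeasure (P n)] {E : (n : ℕ) → Set (Ω n)}
    (h : Tendsto (fun n => P n (E n)ᶜ) atTop (𝓝 0)) :
    Tendsto (fun n => P n (E n)) atTop (𝓝 1) := by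
  have hlower : Tendsto (fun n => 1 - P n (E n)ᶜ) atTop (𝓝 1) := by
    simpa using ENNReal.Tendsto.sub tendsto_const_nhds h (Or.inl ENNReal.one_ne_top)
  refine tendsto_of_tendsto_of_tendsto_of_le_of_le hlower tendsto_const_nhds (fun n => ?_)
    (fun n => prob_le_one)
  rw [tsub_le_iff_right, ← measure_univ (μ := P n), ← Set.union_compl_self (E n)]
  exact measure_union_le _ _

lemma measure_false_positive_le_sum {Ω : Type*} [MeasurableSpace Ω] {P : Measure Ω}
    {p b : ℕ} {blk : Fin p → Fin b} {β : Fin p → ℝ} {X : Fin p → Ω → ℝ} {v : ℝ≥0}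
    (hlaw : ∀ i, P.map (X i) = gaussianReal (β i) v) (τ : Fin b → ℝ) :
    P {ω | ∀ i, τ (blk i) < |X i ω| → β i ≠ 0}ᶜ ≤
      ∑ j, inactJ blk β j * gaussianReal 0 v {x | τ j < |x|} := by
  classical
  set F := univ.filter (fun i => β i = 0)
  have hcover : {ω | ∀ i, τ (blk i) < |X i ω| → β i ≠ 0}ᶜ ⊆
      ⋃ i ∈ F, X i ⁻¹' {x | τ (blk i) < |x|} := by
    intro ω hω
    simp only [Set.mem_compl_iff, Set.mem_ofPred_eq, not_forall, not_not] at hω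
    obtain ⟨i, hτi, hβi⟩ := hω
    exact Set.mem_biUnion (by simpa [F] using hβi) hτi
  have hcoord : ∀ i ∈ F, P (X i ⁻¹' {x | τ (blk i) < |x|}) =
      gaussianReal 0 v {x | τ (blk i) < |x|} := by
    intro i hi
    have hX : AEMeasurable (X i) P :=
      AEMeasurable.of_map_ne_zero (by rw [hlaw]; exact IsProbabilityMeasure.ne_zero _)
    rw [← Measure.map_apply_of_aemeasurable hX (measurableSet_lt measurable_const measurable_abs),
      hlaw, (mem_filter.1 hi).2]
  have hfiber : ∀ j, #(F.filter (fun i => blk i = j)) = inactJ blk β j := by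
    intro j
    simp only [F, inactJ, filter_filter, and_comm]
  calc P {ω | ∀ i, τ (blk i) < |X i ω| → β i ≠ 0}ᶜ
      ≤ ∑ i ∈ F, P (X i ⁻¹' {x | τ (blk i) < |x|}) :=
        (measure_mono hcover).trans (measure_biUnion_finset_le _ _)
    _ = ∑ i ∈ F, gaussianReal 0 v {x | τ (blk i) < |x|} := sum_congr rfl hcoord
    _ = ∑ j, inactJ blk β j * gaussianReal 0 v {x | τ j < |x|} := by
        rw [← sum_fiberwise F blk]
        refine sum_congr rfl fun j _ => ?_
        rw [sum_congr rfl fun i hi => by rw [(mem_filter.1 hi).2], sum_const, hfiber, nsmul_eq_mul]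

theorem stmt4_general (b : ℕ) (p : ℕ → ℕ)
    (blk : (n : ℕ) → Fin (p n) → Fin b)
    (βs : (n : ℕ) → Fin (p n) → ℝ)
    (τ : ℕ → Fin b → ℝ)
    (Ω : ℕ → Type) [∀ n, MeasurableSpace (Ω n)]
    (Pr : (n : ℕ) → Measure (Ω n)) [∀ n, IsProbabilityMeasure (Pr n)]
    (βt : (n : ℕ) → Fin (p n) → Ω n → ℝ)
    (hlaw : ∀ n i, Measure.map (βt n i) (Pr n) =
      gaussianReal (βs n i) ((n : ℝ≥0))⁻¹)
    (hA2 : ∀ j, Tendsto (fun n => inactJ (blk n) (βs n) j) atTop atTop)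
    (hA4 : ∀ j, ∀ᶠ n : ℕ in atTop,
      Real.sqrt (2 * Real.log (inactJ (blk n) (βs n) j)) ≤ Real.sqrt n * τ n j) :
    Tendsto (fun n => (Pr n {ω | ∀ i : Fin (p n),
        τ n (blk n i) < |βt n i ω| → βs n i ≠ 0}).toReal) atTop (nhds 1) := by
  set ε : ℕ → ℝ := fun n => ∑ j, (√(π * log (inactJ (blk n) (βs n) j)))⁻¹
  have hε : Tendsto ε atTop (𝓝 0) := by
    simpa using tendsto_finsetSum univ fun j _ =>
      (tendsto_sqrt_atTop.comp ((tendsto_log_atTop.comp (tendsto_natCast_atTop_atTop.comp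
        (hA2 j))).const_mul_atTop pi_pos)).inv_tendsto_atTop
  have hbound : ∀ᶠ n in atTop, Pr n {ω | ∀ i : Fin (p n),
      τ n (blk n i) < |βt n i ω| → βs n i ≠ 0}ᶜ ≤ ENNReal.ofReal (ε n) := by
    filter_upwards [eventually_ge_atTop 1, eventually_all.2 fun j => (hA2 j).eventually_ge_atTop 2,
      eventually_all.2 hA4] with n hn hm hA4n
    have hv : ((n : ℝ≥0))⁻¹ ≠ 0 := inv_ne_zero (by exact_mod_cast (by omega : n ≠ 0))
    refine (measure_false_positive_le_sum (hlaw n) (τ n)).trans ?_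
    rw [ENNReal.ofReal_sum_of_nonneg fun j _ => by positivity]
    refine sum_le_sum fun j _ => natCast_mul_gaussianReal_lt_abs_le hv (hm j) ?_
    simpa [sqrt_inv, mul_comm] using hA4n j
  refine (ENNReal.tendsto_toReal ENNReal.one_ne_top).comp
    (tendsto_measure_of_tendsto_measure_compl ?_)
  refine tendsto_of_tendsto_of_tendsto_of_le_of_le' tendsto_const_nhds ?_
    (Eventually.of_forall fun n => zero_le) hbound
  simpa using ENNReal.tendsto_ofReal hε

/-- **Proposition 3.2(i).** In the Gaussian sequence model with block structure
(`β̃_i ~ N(β*_i, 1/n)` independent; blocks given by the block assignment `blk`;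
A1: the number `b` of blocks is constant; A2: `p_j − s_j → ∞`; A3: `s_j → ∞`),
if Assumption A4 holds (for every `j` and all sufficiently large `n`,
`√n τ_j ≥ √(2 ln(p_j − s_j))`), then `P(Ŝᵇ ⊆ S) → 1`, where
`Ŝᵇ = {i : |β̃_i| > τ_{blk i}}` and `S` is the support of `β*`. -/
theorem stmt4 (b : ℕ) (p : ℕ → ℕ)
    (blk : (n : ℕ) → Fin (p n) → Fin b)
    (βs : (n : ℕ) → Fin (p n) → ℝ)
    (τ : ℕ → Fin b → ℝ) (hτ : ∀ n j, 0 < τ n j)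
    (Ω : ℕ → Type) [∀ n, MeasurableSpace (Ω n)]
    (Pr : (n : ℕ) → Measure (Ω n)) [∀ n, IsProbabilityMeasure (Pr n)]
    (βt : (n : ℕ) → Fin (p n) → Ω n → ℝ)
    (hmeas : ∀ n i, Measurable (βt n i))
    (hindep : ∀ n, iIndepFun (βt n) (Pr n))
    (hlaw : ∀ n i, Measure.map (βt n i) (Pr n) =
      gaussianReal (βs n i) ((n : ℝ≥0))⁻¹)
    (hA2 : ∀ j, Tendsto (fun n => inactJ (blk n) (βs n) j) atTop atTop)
    (hA3 : ∀ j, Tendsto (fun n => actJ (blk n) (βs n) j) atTop atTop)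
    (hA4 : ∀ j, ∀ᶠ n : ℕ in atTop,
      Real.sqrt (2 * Real.log (inactJ (blk n) (βs n) j)) ≤ Real.sqrt n * τ n j) :
    Tendsto (fun n => (Pr n {ω | ∀ i : Fin (p n),
        τ n (blk n i) < |βt n i ω| → βs n i ≠ 0}).toReal) atTop (nhds 1) :=
  stmt4_general b p blk βs τ Ω Pr βt hlaw hA2 hA4
end

section
/- In the Gaussian sequence model with block structure, assume A1, A2, A3, and Assumption A5: for every j and every sufficiently large n, √n (β*_{min,j} − τ_j) ≥ √(2 ln s_j). Then P(Ŝ^b ⊇ S) → 1 as n → ∞. (Proposition 3.2(iii): all active coordinates are retained asymptotically.) -/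
/-! On the complement of the event, some active coordinate `i` of a block `j` has
`|β̃ᵢ| ≤ τⱼ`, hence `|β̃ᵢ - β*ᵢ| ≥ |β*ᵢ| - τⱼ ≥ tⱼ / √n` with `tⱼ = √(2 log sⱼ)` by A5.
The Mills-ratio bound `P(|Z| ≥ t) ≤ 2 φ(t) / t` for a standard Gaussian `Z` makes this
probability at most `1 / (sⱼ √(π log sⱼ))`, because `exp (-tⱼ² / 2) = 1 / sⱼ`. A union bound over
the `sⱼ` active coordinates of each block leaves `∑ⱼ 1 / √(π log sⱼ)`, which tends to `0` since
there are finitely many blocks and every `sⱼ → ∞`. -/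

open MeasureTheory ProbabilityTheory Filter Finset
open scoped NNReal

open Real
open scoped ENNReal Topology

lemma integral_Ioi_mul_exp_neg_sq_div_two {a : ℝ} (ha : 0 ≤ a) :
    ∫ x in Set.Ioi a, x * exp (-x ^ 2 / 2) = exp (-a ^ 2 / 2) := by
  have hderiv : ∀ x ∈ Set.Ici a, HasDerivAt (fun x => -exp (-x ^ 2 / 2)) (x * exp (-x ^ 2 / 2)) x :=
    fun x _ => (((hasDerivAt_pow 2 x).neg.div_const 2).exp).neg.congr_deriv
      (by simp only [Pi.neg_apply]; ring)
  have hnonneg : ∀ x ∈ Set.Ioi a, 0 ≤ x * exp (-x ^ 2 / 2) :=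
    fun x hx => mul_nonneg (ha.trans (le_of_lt hx)) (exp_nonneg _)
  have hlim : Tendsto (fun x : ℝ => -exp (-x ^ 2 / 2)) atTop (𝓝 (-0)) := by
    refine (tendsto_exp_atBot.comp ?_).neg
    exact tendsto_neg_atTop_atBot.comp ((tendsto_pow_atTop two_ne_zero).atTop_div_const two_pos)
      |>.congr fun x => by simp [neg_div]
  rw [integral_Ioi_of_hasDerivAt_of_nonneg' hderiv hnonneg hlim]
  ring

lemma gaussianReal_Ici_le {t : ℝ} (ht : 0 < t) :
    gaussianReal 0 1 (Set.Ici t) ≤ ENNReal.ofReal (exp (-t ^ 2 / 2) / (√(2 * π) * t)) := by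
  have hpdf : gaussianPDFReal 0 1 = fun x => (√(2 * π))⁻¹ * exp (-x ^ 2 / 2) := by
    ext x; simp [gaussianPDFReal]
  have hint : IntegrableOn (fun x => (√(2 * π) * t)⁻¹ * (x * exp (-x ^ 2 / 2))) (Set.Ici t) := by
    refine (Integrable.const_mul ?_ _).integrableOn
    simpa [neg_div, div_eq_inv_mul, mul_comm] using
      integrable_mul_exp_neg_mul_sq (b := 1 / 2) (by norm_num)
  rw [gaussianReal_apply_eq_integral 0 one_ne_zero]
  refine ENNReal.ofReal_le_ofReal ?_
  calc ∫ x in Set.Ici t, gaussianPDFReal 0 1 x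
      ≤ ∫ x in Set.Ici t, (√(2 * π) * t)⁻¹ * (x * exp (-x ^ 2 / 2)) := by
        refine setIntegral_mono_on (integrable_gaussianPDFReal 0 1).integrableOn hint
          measurableSet_Ici fun x (hx : t ≤ x) => ?_
        rw [hpdf, show (√(2 * π) * t)⁻¹ * (x * exp (-x ^ 2 / 2))
          = (√(2 * π))⁻¹ * exp (-x ^ 2 / 2) * (x / t) by field_simp]
        exact le_mul_of_one_le_right (by positivity) ((one_le_div ht).2 hx)
    _ = exp (-t ^ 2 / 2) / (√(2 * π) * t) := by
        rw [integral_Ici_eq_integral_Ioi, integral_const_mul,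
          integral_Ioi_mul_exp_neg_sq_div_two ht.le, inv_mul_eq_div]

lemma gaussianReal_le_abs_le {t : ℝ} (ht : 0 < t) :
    gaussianReal 0 1 {x | t ≤ |x|} ≤ ENNReal.ofReal (2 * (exp (-t ^ 2 / 2) / (√(2 * π) * t))) := by
  have hsymm : gaussianReal 0 1 (Set.Iic (-t)) = gaussianReal 0 1 (Set.Ici t) := by
    conv_lhs => rw [← neg_zero, ← gaussianReal_map_neg]
    rw [Measure.map_apply measurable_neg measurableSet_Iic]
    congr 1; ext x; simp
  have hsplit : {x : ℝ | t ≤ |x|} = Set.Iic (-t) ∪ Set.Ici t := by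
    ext x; simp [le_abs, le_neg, or_comm]
  rw [hsplit, ENNReal.ofReal_mul zero_le_two, ENNReal.ofReal_ofNat, two_mul]
  calc _ ≤ gaussianReal 0 1 (Set.Iic (-t)) + gaussianReal 0 1 (Set.Ici t) := measure_union_le _ _
    _ ≤ _ := by rw [hsymm]; gcongr <;> exact gaussianReal_Ici_le ht

lemma gaussianReal_sqrt_mul_le_abs_sub {μ : ℝ} {v : ℝ≥0} (hv : v ≠ 0) (t : ℝ) :
    gaussianReal μ v {x | √v * t ≤ |x - μ|} = gaussianReal 0 1 {x | t ≤ |x|} := by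
  have hsv : 0 < √(v : ℝ) := by positivity
  have hstd : (gaussianReal μ v).map (fun x => (x - μ) / √v) = gaussianReal 0 1 := by
    change (gaussianReal μ v).map ((· / √v) ∘ (· - μ)) = _
    rw [← Measure.map_map (by fun_prop) (by fun_prop), gaussianReal_map_sub_const,
      gaussianReal_map_div_const, sub_self, zero_div]
    congr
    ext
    simp [Real.sq_sqrt, hv]
  rw [← hstd, Measure.map_apply (by fun_prop) (measurableSet_le measurable_const (by fun_prop))]
  congr 1; ext x
  simp [abs_div, abs_of_pos hsv, le_div_iff₀ hsv, mul_comm]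

lemma measure_abs_le_le_of_map_eq_gaussianReal {Ω : Type*} [MeasurableSpace Ω] {P : Measure Ω}
    {X : Ω → ℝ} {μ : ℝ} {v : ℝ≥0} (hv : v ≠ 0) (hX : P.map X = gaussianReal μ v) {τ t : ℝ}
    (ht : 0 < t) (hgap : √v * t ≤ |μ| - τ) :
    P {ω | |X ω| ≤ τ} ≤ ENNReal.ofReal (2 * (exp (-t ^ 2 / 2) / (√(2 * π) * t))) := by
  -- `Measure.map` sends a function that is not a.e.-measurable to `0`, so the law forces it.
  have hXm : AEMeasurable X P :=
    .of_map_ne_zero (by rw [hX]; exact IsProbabilityMeasure.ne_zero _)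
  calc P {ω | |X ω| ≤ τ}
      ≤ P (X ⁻¹' {x | √v * t ≤ |x - μ|}) := measure_mono fun ω (hω : |X ω| ≤ τ) => by
        have := abs_sub_abs_le_abs_sub μ (X ω)
        simp only [Set.mem_preimage, Set.mem_ofPred_eq, abs_sub_comm (X ω)]
        linarith
    _ = gaussianReal μ v {x | √v * t ≤ |x - μ|} := by
        rw [← hX, Measure.map_apply_of_aemeasurable hXm
          (measurableSet_le measurable_const (by fun_prop))]
    _ ≤ _ := (gaussianReal_sqrt_mul_le_abs_sub hv t).trans_le (gaussianReal_le_abs_le ht)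

lemma two_mul_exp_div_sqrt_two_mul_log {s : ℝ} (hs : 1 < s) :
    2 * (exp (-√(2 * log s) ^ 2 / 2) / (√(2 * π) * √(2 * log s))) = (s * √(π * log s))⁻¹ := by
  have hlog : 0 < log s := log_pos hs
  have hsqrt : √(2 * π) * √(2 * log s) = 2 * √(π * log s) := by
    rw [← sqrt_mul (by positivity), show 2 * π * (2 * log s) = 2 ^ 2 * (π * log s) by ring,
      sqrt_mul (by positivity), sqrt_sq zero_le_two]
  rw [sq_sqrt (by positivity), hsqrt, show -(2 * log s) / 2 = -log s by ring, exp_neg,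
    exp_log (by linarith)]
  field_simp

lemma measure_biUnion_le_sum_card_filter_mul {Ω ι κ : Type*} [MeasurableSpace Ω] [Fintype κ]
    [DecidableEq κ] (P : Measure Ω) (S : Finset ι) (g : ι → κ) (E : ι → Set Ω) (c : κ → ℝ≥0∞)
    (h : ∀ i ∈ S, P (E i) ≤ c (g i)) :
    P (⋃ i ∈ S, E i) ≤ ∑ k, #{i ∈ S | g i = k} * c k := by
  calc P (⋃ i ∈ S, E i) ≤ ∑ i ∈ S, c (g i) := (measure_biUnion_finset_le S E).trans (sum_le_sum h)
    _ = ∑ k, ∑ i ∈ S with g i = k, c k := by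
        rw [← sum_fiberwise S g]
        exact sum_congr rfl fun k _ => sum_congr rfl fun i hi => by rw [(mem_filter.1 hi).2]
    _ = _ := by simp only [sum_const, nsmul_eq_mul]

lemma measure_exists_active_abs_le_le {Ω : Type*} [MeasurableSpace Ω] {P : Measure Ω} {p b : ℕ}
    {blk : Fin p → Fin b} {βs : Fin p → ℝ} {τ : Fin b → ℝ} {βt : Fin p → Ω → ℝ} {v : ℝ≥0}
    (hv : v ≠ 0) (hlaw : ∀ i, P.map (βt i) = gaussianReal (βs i) v)
    (hs : ∀ j, 1 < actJ blk βs j)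
    (hgap : ∀ i, βs i ≠ 0 → √v * √(2 * log (actJ blk βs (blk i))) ≤ |βs i| - τ (blk i)) :
    P {ω | ∃ i, βs i ≠ 0 ∧ |βt i ω| ≤ τ (blk i)}
      ≤ ENNReal.ofReal (∑ j, (√(π * log (actJ blk βs j)))⁻¹) := by
  have hs' : ∀ j, (1 : ℝ) < actJ blk βs j := fun j => by exact_mod_cast hs j
  have hcard : ∀ j, #{i ∈ univ.filter (βs · ≠ 0) | blk i = j} = actJ blk βs j := fun j => by
    rw [filter_filter, actJ]; simp only [and_comm]
  have hunion : {ω | ∃ i, βs i ≠ 0 ∧ |βt i ω| ≤ τ (blk i)}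
      = ⋃ i ∈ univ.filter (βs · ≠ 0), {ω | |βt i ω| ≤ τ (blk i)} := by
    ext; simp
  rw [hunion]
  refine (measure_biUnion_le_sum_card_filter_mul P _ blk _
    (fun j => ENNReal.ofReal (actJ blk βs j * √(π * log (actJ blk βs j)))⁻¹) fun i hi => ?_).trans ?_
  · rw [← two_mul_exp_div_sqrt_two_mul_log (hs' (blk i))]
    exact measure_abs_le_le_of_map_eq_gaussianReal hv (hlaw i)
      (sqrt_pos.2 (mul_pos two_pos (log_pos (hs' _)))) (hgap i (mem_filter.1 hi).2)
  · rw [ENNReal.ofReal_sum_of_nonneg fun j _ => by positivity]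
    refine sum_le_sum fun j _ => ?_
    rw [hcard, ← ENNReal.ofReal_natCast, ← ENNReal.ofReal_mul (by positivity), mul_inv,
      ← mul_assoc, mul_inv_cancel₀ (by linarith [hs' j]), one_mul]

lemma tendsto_inv_sqrt_mul_log_atTop {α : Type*} {l : Filter α} {f : α → ℕ}
    (hf : Tendsto f l atTop) {c : ℝ} (hc : 0 < c) :
    Tendsto (fun x => (√(c * log (f x)))⁻¹) l (𝓝 0) :=
  tendsto_inv_atTop_zero.comp <| tendsto_sqrt_atTop.comp <| Tendsto.const_mul_atTop hc <|
    tendsto_log_atTop.comp <| tendsto_natCast_atTop_atTop.comp hf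

lemma tendsto_toReal_measure_of_tendsto_toReal_measure_compl {ι : Type*} {l : Filter ι}
    {Ω : ι → Type*} [∀ i, MeasurableSpace (Ω i)] {P : ∀ i, Measure (Ω i)}
    [∀ i, IsProbabilityMeasure (P i)] {A : ∀ i, Set (Ω i)}
    (h : Tendsto (fun i => (P i (A i)ᶜ).toReal) l (𝓝 0)) :
    Tendsto (fun i => (P i (A i)).toReal) l (𝓝 1) := by
  have hlower : ∀ i, 1 - (P i (A i)ᶜ).toReal ≤ (P i (A i)).toReal := fun i => by
    have := ENNReal.toReal_mono (by finiteness) (measure_univ_le_add_compl (μ := P i) (A i))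
    rw [measure_univ, ENNReal.toReal_one, ENNReal.toReal_add (by finiteness) (by finiteness)]
      at this
    linarith
  refine tendsto_of_tendsto_of_tendsto_of_le_of_le (by simpa using tendsto_const_nhds.sub h)
    tendsto_const_nhds hlower fun i => ?_
  exact ENNReal.toReal_le_of_le_ofReal zero_le_one (by simpa using prob_le_one)

theorem stmt6_general (b : ℕ) (p : ℕ → ℕ)
    (blk : (n : ℕ) → Fin (p n) → Fin b)
    (βs : (n : ℕ) → Fin (p n) → ℝ)
    (τ : ℕ → Fin b → ℝ)
    (Ω : ℕ → Type) [∀ n, MeasurableSpace (Ω n)]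
    (Pr : (n : ℕ) → Measure (Ω n)) [∀ n, IsProbabilityMeasure (Pr n)]
    (βt : (n : ℕ) → Fin (p n) → Ω n → ℝ)
    (hlaw : ∀ n i, Measure.map (βt n i) (Pr n) =
      gaussianReal (βs n i) ((n : ℝ≥0))⁻¹)
    (hA3 : ∀ j, Tendsto (fun n => actJ (blk n) (βs n) j) atTop atTop)
    (hA5 : ∀ j, ∀ᶠ n : ℕ in atTop, ∀ i : Fin (p n), blk n i = j → βs n i ≠ 0 →
      Real.sqrt (2 * Real.log (actJ (blk n) (βs n) j)) ≤
        Real.sqrt n * (|βs n i| - τ n j)) :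
    Tendsto (fun n => (Pr n {ω | ∀ i : Fin (p n),
        βs n i ≠ 0 → τ n (blk n i) < |βt n i ω|}).toReal) atTop (nhds 1) := by
  refine tendsto_toReal_measure_of_tendsto_toReal_measure_compl <| squeeze_zero'
    (.of_forall fun _ => ENNReal.toReal_nonneg) ?_
    (by simpa using tendsto_finsetSum univ fun j _ => tendsto_inv_sqrt_mul_log_atTop (hA3 j) pi_pos)
  filter_upwards [eventually_gt_atTop 0, eventually_all.2 fun j => (hA3 j).eventually_gt_atTop 1,
    eventually_all.2 hA5] with n hn hs hgap
  refine ENNReal.toReal_le_of_le_ofReal (by positivity) ?_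
  simp only [Set.compl_ofPred, not_forall, not_lt, exists_prop]
  refine measure_exists_active_abs_le_le (by simpa using hn.ne') (hlaw n) hs fun i hi => ?_
  have hsqrt : 0 < √(n : ℝ) := sqrt_pos.2 (by exact_mod_cast hn)
  rw [NNReal.coe_inv, NNReal.coe_natCast, sqrt_inv, inv_mul_le_iff₀ hsqrt]
  exact hgap _ i rfl hi

/-- **Proposition 3.2(iii).** In the Gaussian sequence model with block structure
(assumptions A1, A2, A3), if Assumption A5 holds (for every `j` and all sufficiently
large `n`, `√n (β*_{min,j} − τ_j) ≥ √(2 ln s_j)`, stated equivalently for every active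
coordinate `i` of block `j`), then `P(Ŝᵇ ⊇ S) → 1` as `n → ∞`. -/
theorem stmt6 (b : ℕ) (p : ℕ → ℕ)
    (blk : (n : ℕ) → Fin (p n) → Fin b)
    (βs : (n : ℕ) → Fin (p n) → ℝ)
    (τ : ℕ → Fin b → ℝ) (hτ : ∀ n j, 0 < τ n j)
    (Ω : ℕ → Type) [∀ n, MeasurableSpace (Ω n)]
    (Pr : (n : ℕ) → Measure (Ω n)) [∀ n, IsProbabilityMeasure (Pr n)]
    (βt : (n : ℕ) → Fin (p n) → Ω n → ℝ)
    (hmeas : ∀ n i, Measurable (βt n i))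
    (hindep : ∀ n, iIndepFun (βt n) (Pr n))
    (hlaw : ∀ n i, Measure.map (βt n i) (Pr n) =
      gaussianReal (βs n i) ((n : ℝ≥0))⁻¹)
    (hA2 : ∀ j, Tendsto (fun n => inactJ (blk n) (βs n) j) atTop atTop)
    (hA3 : ∀ j, Tendsto (fun n => actJ (blk n) (βs n) j) atTop atTop)
    (hA5 : ∀ j, ∀ᶠ n : ℕ in atTop, ∀ i : Fin (p n), blk n i = j → βs n i ≠ 0 →
      Real.sqrt (2 * Real.log (actJ (blk n) (βs n) j)) ≤
        Real.sqrt n * (|βs n i| - τ n j)) :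
    Tendsto (fun n => (Pr n {ω | ∀ i : Fin (p n),
        βs n i ≠ 0 → τ n (blk n i) < |βt n i ω|}).toReal) atTop (nhds 1) :=
  stmt6_general b p blk βs τ Ω Pr βt hlaw hA3 hA5
end

section
/- In the Gaussian sequence model with block structure, assume Assumption A4 (for every j and every sufficiently large n, √n τ_j ≥ √(2 ln(p_j − s_j))), Assumption A5 (for every j and every sufficiently large n, √n (β*_{min,j} − τ_j) ≥ √(2 ln s_j)), and that p_j − s_j > 1 and s_j > 1 for every j. Then for every sufficiently large n: P(Ŝ^b ≠ S) ≤ Σ_{j=1}^b [ e^{−(n/2)(τ_j² − 2 ln(p_j−s_j)/n)} / √(π ln(p_j−s_j)) + e^{−(n/2)((β*_{min,j} − τ_j)² − 2 ln(s_j)/n)} / √(π ln s_j) ]. (Theorem 3.4, first part: non-asymptotic bound on the probability of incorrect model recovery.) -/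
open MeasureTheory ProbabilityTheory Filter Finset
open scoped NNReal

/-!
A union bound over the coordinates reduces the claim to one Gaussian tail per coordinate: an
inactive coordinate of block `j` is selected only if `|β̃_i - 0| > τ_j`, an active one is missed
only if `|β̃_i - β*_i| ≥ β*_{min,j} - τ_j`. Mills' ratio `P(|X - μ| ≥ t) ≤ 2 v φ(t) / t` for
`X ~ N(μ, v)`, with `v = 1/n` and Assumptions A4/A5 bounding `√n t` from below, turns each tail
into `e^{-n t²/2} / √(π ln m)`; the `m = p_j - s_j` (resp. `s_j`) equal terms of block `j` sum to
`e^{-(n/2)(t² - 2 ln m / n)} / √(π ln m)`.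
-/

open Real Set Topology

lemma integral_Ioi_mul_exp_neg_mul_sq {c : ℝ} (hc : 0 < c) (t : ℝ) :
    ∫ x in Ioi t, x * exp (-c * x ^ 2) = exp (-c * t ^ 2) / (2 * c) := by
  have hderiv : ∀ x ∈ Ici t,
      HasDerivAt (fun x ↦ -(exp (-c * x ^ 2) / (2 * c))) (x * exp (-c * x ^ 2)) x :=
    fun x _ ↦ (((hasDerivAt_pow 2 x).const_mul (-c)).exp.div_const (2 * c)).neg.congr_deriv
      (by field_simp; ring)
  have hlim : Tendsto (fun x ↦ -(exp (-c * x ^ 2) / (2 * c))) atTop (𝓝 0) := by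
    have h := (tendsto_pow_atTop two_ne_zero).const_mul_atTop_of_neg (neg_lt_zero.mpr hc)
    simpa using ((tendsto_exp_atBot.comp h).div_const (2 * c)).neg
  rw [integral_Ioi_of_hasDerivAt_of_tendsto' hderiv
    (integrable_mul_exp_neg_mul_sq hc).integrableOn hlim]
  ring

lemma gaussianReal_real_Ici_le {v : ℝ≥0} (hv : v ≠ 0) {t : ℝ} (ht : 0 < t) :
    (gaussianReal 0 v).real (Ici t) ≤ v / t * gaussianPDFReal 0 v t := by
  set c : ℝ := (2 * (v : ℝ))⁻¹
  have hc : 0 < c := by positivity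
  have hpdf : ∀ x, gaussianPDFReal 0 v x = (√(2 * π * v))⁻¹ * exp (-c * x ^ 2) := by
    intro x
    rw [gaussianPDFReal, sub_zero, neg_div, neg_mul, div_eq_inv_mul]
  rw [measureReal_def, gaussianReal_apply_eq_integral 0 hv,
    ENNReal.toReal_ofReal (setIntegral_nonneg measurableSet_Ici
      fun x _ ↦ gaussianPDFReal_nonneg 0 v x), integral_Ici_eq_integral_Ioi]
  calc ∫ x in Ioi t, gaussianPDFReal 0 v x
      ≤ ∫ x in Ioi t, (√(2 * π * v))⁻¹ / t * (x * exp (-c * x ^ 2)) := by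
        refine setIntegral_mono_on (integrable_gaussianPDFReal 0 v).integrableOn
          ((integrable_mul_exp_neg_mul_sq hc).integrableOn.const_mul _) measurableSet_Ioi
          fun x hx ↦ ?_
        have h := mul_le_mul_of_nonneg_left ((one_le_div ht).mpr (le_of_lt hx))
          (gaussianPDFReal_nonneg 0 v x)
        rw [hpdf] at h ⊢
        convert h using 1 <;> ring
    _ = v / t * gaussianPDFReal 0 v t := by
        rw [integral_const_mul, integral_Ioi_mul_exp_neg_mul_sq hc, hpdf]
        field_simp
        rw [mul_inv_cancel₀ (by positivity)]

lemma gaussianReal_real_abs_sub_ge_le (μ : ℝ) {v : ℝ≥0} (hv : v ≠ 0) {t : ℝ} (ht : 0 < t) :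
    (gaussianReal μ v).real {x | t ≤ |x - μ|} ≤ 2 * (v / t * gaussianPDFReal 0 v t) := by
  have hsplit : {x | t ≤ |x - μ|} = (· - μ) ⁻¹' Ici t ∪ (μ - ·) ⁻¹' Ici t := by
    ext x
    simp only [Set.mem_ofPred_eq, Set.mem_union, Set.mem_preimage, Set.mem_Ici, le_abs, neg_sub]
  have hright : (gaussianReal μ v).real ((· - μ) ⁻¹' Ici t) = (gaussianReal 0 v).real (Ici t) := by
    rw [← map_measureReal_apply (by fun_prop) measurableSet_Ici, gaussianReal_map_sub_const,
      sub_self]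
  have hleft : (gaussianReal μ v).real ((μ - ·) ⁻¹' Ici t) = (gaussianReal 0 v).real (Ici t) := by
    rw [← map_measureReal_apply (by fun_prop) measurableSet_Ici, gaussianReal_map_const_sub,
      sub_self]
  calc (gaussianReal μ v).real {x | t ≤ |x - μ|}
      ≤ (gaussianReal μ v).real ((· - μ) ⁻¹' Ici t) +
          (gaussianReal μ v).real ((μ - ·) ⁻¹' Ici t) := by
        rw [hsplit]
        exact measureReal_union_le _ _
    _ ≤ 2 * (v / t * gaussianPDFReal 0 v t) := by
        rw [hright, hleft, ← two_mul]
        gcongr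
        exact gaussianReal_real_Ici_le hv ht

lemma gaussianReal_real_abs_sub_ge_le_exp (μ : ℝ) {N : ℝ≥0} (hN : N ≠ 0) {t L : ℝ}
    (ht : 0 < t) (hL : 0 < L) (htL : √(2 * L) ≤ √N * t) :
    (gaussianReal μ N⁻¹).real {x | t ≤ |x - μ|} ≤ exp (-(N / 2) * t ^ 2) / √(π * L) := by
  refine (gaussianReal_real_abs_sub_ge_le μ (inv_ne_zero hN) ht).trans ?_
  have hN' : (0 : ℝ) < N := by positivity
  have hsqrt : √(2 * π) * √(2 * L) = 2 * √(π * L) := by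
    rw [← sqrt_mul (by positivity), show 2 * π * (2 * L) = 2 ^ 2 * (π * L) by ring,
      sqrt_mul (by positivity), sqrt_sq zero_le_two]
  have hmills : 2 * ((N⁻¹ : ℝ≥0) / t * gaussianPDFReal 0 N⁻¹ t)
      = 2 / (√(2 * π) * (√N * t)) * exp (-(N / 2) * t ^ 2) := by
    rw [gaussianPDFReal, NNReal.coe_inv, sqrt_mul (by positivity), sqrt_inv]
    field_simp
    rw [sq_sqrt hN'.le, sub_zero]
  have hinv : (√(π * L))⁻¹ = 2 / (√(2 * π) * √(2 * L)) := by
    rw [hsqrt]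
    field_simp
  rw [hmills, div_eq_inv_mul (exp _), hinv]
  gcongr

lemma measureReal_abs_sub_ge_le_exp {Ω : Type*} [MeasurableSpace Ω] {P : Measure Ω}
    {X : Ω → ℝ} (hX : Measurable X) {μ : ℝ} {N : ℝ≥0} (hN : N ≠ 0)
    (hlaw : P.map X = gaussianReal μ N⁻¹) {t L : ℝ} (ht : 0 < t) (hL : 0 < L)
    (htL : √(2 * L) ≤ √N * t) :
    P.real {ω | t ≤ |X ω - μ|} ≤ exp (-(N / 2) * t ^ 2) / √(π * L) := by
  have hs : MeasurableSet {x : ℝ | t ≤ |x - μ|} :=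
    measurableSet_le measurable_const (measurable_id.sub_const μ).abs
  change P.real (X ⁻¹' {x | t ≤ |x - μ|}) ≤ _
  rw [← map_measureReal_apply hX hs, hlaw]
  exact gaussianReal_real_abs_sub_ge_le_exp μ hN ht hL htL

lemma le_abs_sub_of_not_iff_of_eq_zero {τ x β : ℝ} (hβ : β = 0) (h : ¬(τ < |x| ↔ β ≠ 0)) :
    τ ≤ |x - β| := by
  subst hβ
  simp only [ne_eq, not_true_eq_false, iff_false, not_not, sub_zero] at h ⊢
  exact h.le

lemma sub_le_abs_sub_of_not_iff_of_ne_zero {τ x β : ℝ} (hβ : β ≠ 0)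
    (h : ¬(τ < |x| ↔ β ≠ 0)) : |β| - τ ≤ |x - β| := by
  have hx : |x| ≤ τ := by simpa [hβ] using h
  have := abs_sub_abs_le_abs_sub β x
  rw [abs_sub_comm] at this
  linarith

lemma sum_ite_eq_zero_eq_sum_inactJ_actJ {P b : ℕ} (blk : Fin P → Fin b) (βs : Fin P → ℝ)
    (f g : Fin b → ℝ) :
    ∑ i, (if βs i = 0 then f (blk i) else g (blk i)) =
      ∑ j, (inactJ blk βs j * f j + actJ blk βs j * g j) := by
  rw [← Finset.sum_fiberwise univ blk]
  refine sum_congr rfl fun j _ ↦ ?_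
  rw [sum_ite, filter_filter, filter_filter,
    sum_eq_card_nsmul fun i hi ↦ congrArg f (mem_filter.mp hi).2.1,
    sum_eq_card_nsmul fun i hi ↦ congrArg g (mem_filter.mp hi).2.1, nsmul_eq_mul, nsmul_eq_mul]
  rfl

lemma natCast_mul_exp_neg_mul {m : ℕ} (hm : 0 < m) {a : ℝ} (ha : a ≠ 0) (s : ℝ) :
    m * exp (-(a / 2) * s) = exp (-(a / 2) * (s - 2 * log m / a)) := by
  rw [show -(a / 2) * (s - 2 * log m / a) = -(a / 2) * s + log m by field_simp; ring, exp_add,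
    exp_log (by positivity), mul_comm]

theorem measureReal_selection_error_le {Ω : Type*} [MeasurableSpace Ω] {P : Measure Ω}
    [IsFiniteMeasure P] {p b : ℕ} (blk : Fin p → Fin b) (βs : Fin p → ℝ) (τ βmin : Fin b → ℝ)
    {n : ℕ} (hn : n ≠ 0) (X : Fin p → Ω → ℝ) (hX : ∀ i, Measurable (X i))
    (hlaw : ∀ i, P.map (X i) = gaussianReal (βs i) (n : ℝ≥0)⁻¹) (hτ : ∀ j, 0 < τ j)
    (hβmin : ∀ i, βs i ≠ 0 → βmin (blk i) ≤ |βs i|)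
    (hcard : ∀ j, 1 < inactJ blk βs j ∧ 1 < actJ blk βs j)
    (hA4 : ∀ j, √(2 * log (inactJ blk βs j)) ≤ √n * τ j)
    (hA5 : ∀ j, √(2 * log (actJ blk βs j)) ≤ √n * (βmin j - τ j)) :
    P.real {ω | ¬ ∀ i, (τ (blk i) < |X i ω| ↔ βs i ≠ 0)} ≤
      ∑ j, (exp (-(n / 2) * (τ j ^ 2 - 2 * log (inactJ blk βs j) / n)) /
          √(π * log (inactJ blk βs j)) +
        exp (-(n / 2) * ((βmin j - τ j) ^ 2 - 2 * log (actJ blk βs j) / n)) /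
          √(π * log (actJ blk βs j))) := by
  have hN : (n : ℝ≥0) ≠ 0 := by exact_mod_cast hn
  have hlogI : ∀ j, 0 < log (inactJ blk βs j) := fun j ↦ log_pos (by exact_mod_cast (hcard j).1)
  have hlogA : ∀ j, 0 < log (actJ blk βs j) := fun j ↦ log_pos (by exact_mod_cast (hcard j).2)
  have hgap : ∀ j, 0 < βmin j - τ j := fun j ↦ pos_of_mul_pos_right
    ((sqrt_pos.mpr (by linarith [hlogA j])).trans_le (hA5 j)) (sqrt_nonneg _)
  have hcoord : ∀ i, P.real {ω | ¬(τ (blk i) < |X i ω| ↔ βs i ≠ 0)} ≤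
      if βs i = 0 then exp (-(n / 2) * τ (blk i) ^ 2) / √(π * log (inactJ blk βs (blk i)))
      else exp (-(n / 2) * (βmin (blk i) - τ (blk i)) ^ 2) /
        √(π * log (actJ blk βs (blk i))) := by
    intro i
    split_ifs with hβ
    · refine (measureReal_mono fun ω hω ↦ le_abs_sub_of_not_iff_of_eq_zero hβ hω).trans ?_
      have := measureReal_abs_sub_ge_le_exp (hX i) hN (hlaw i) (hτ (blk i)) (hlogI _) (hA4 _)
      rwa [NNReal.coe_natCast] at this
    · refine (measureReal_mono fun ω hω ↦ (sub_le_sub_right (hβmin i hβ) _).trans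
        (sub_le_abs_sub_of_not_iff_of_ne_zero hβ hω)).trans ?_
      have := measureReal_abs_sub_ge_le_exp (hX i) hN (hlaw i) (hgap (blk i)) (hlogA _) (hA5 _)
      rwa [NNReal.coe_natCast] at this
  calc P.real {ω | ¬ ∀ i, (τ (blk i) < |X i ω| ↔ βs i ≠ 0)}
      = P.real (⋃ i, {ω | ¬(τ (blk i) < |X i ω| ↔ βs i ≠ 0)}) := by
        simp only [not_forall, Set.ofPred_exists]
    _ ≤ ∑ i, P.real {ω | ¬(τ (blk i) < |X i ω| ↔ βs i ≠ 0)} := measureReal_iUnion_fintype_le _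
    _ ≤ _ := sum_le_sum fun i _ ↦ hcoord i
    _ = _ := by
      rw [sum_ite_eq_zero_eq_sum_inactJ_actJ blk βs
        (fun j ↦ exp (-(n / 2) * τ j ^ 2) / √(π * log (inactJ blk βs j)))
        (fun j ↦ exp (-(n / 2) * (βmin j - τ j) ^ 2) / √(π * log (actJ blk βs j)))]
      refine sum_congr rfl fun j _ ↦ ?_
      have hn' : (n : ℝ) ≠ 0 := by exact_mod_cast hn
      rw [← mul_div_assoc, ← mul_div_assoc,
        natCast_mul_exp_neg_mul (by linarith [(hcard j).1]) hn',
        natCast_mul_exp_neg_mul (by linarith [(hcard j).2]) hn']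

theorem stmt9_general (b : ℕ) (p : ℕ → ℕ)
    (blk : (n : ℕ) → Fin (p n) → Fin b)
    (βs : (n : ℕ) → Fin (p n) → ℝ)
    (τ : ℕ → Fin b → ℝ) (hτ : ∀ n j, 0 < τ n j)
    (Ω : ℕ → Type) [∀ n, MeasurableSpace (Ω n)]
    (Pr : (n : ℕ) → Measure (Ω n)) [∀ n, IsProbabilityMeasure (Pr n)]
    (βt : (n : ℕ) → Fin (p n) → Ω n → ℝ)
    (hmeas : ∀ n i, Measurable (βt n i))
    (hlaw : ∀ n i, Measure.map (βt n i) (Pr n) =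
      gaussianReal (βs n i) ((n : ℝ≥0))⁻¹)
    (βmin : ℕ → Fin b → ℝ)
    (hβmin : ∀ n j, (∀ i : Fin (p n), blk n i = j → βs n i ≠ 0 → βmin n j ≤ |βs n i|) ∧
      ∃ i : Fin (p n), blk n i = j ∧ βs n i ≠ 0 ∧ βmin n j = |βs n i|)
    (hcard : ∀ n j, 1 < inactJ (blk n) (βs n) j ∧ 1 < actJ (blk n) (βs n) j)
    (hA4 : ∀ j, ∀ᶠ n : ℕ in atTop,
      Real.sqrt (2 * Real.log (inactJ (blk n) (βs n) j)) ≤ Real.sqrt n * τ n j)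
    (hA5 : ∀ j, ∀ᶠ n : ℕ in atTop,
      Real.sqrt (2 * Real.log (actJ (blk n) (βs n) j)) ≤
        Real.sqrt n * (βmin n j - τ n j)) :
    ∀ᶠ n : ℕ in atTop,
      (Pr n {ω | ¬ ∀ i : Fin (p n),
          (τ n (blk n i) < |βt n i ω| ↔ βs n i ≠ 0)}).toReal ≤
        ∑ j : Fin b,
          (Real.exp (-(n / 2) * (τ n j ^ 2 -
              2 * Real.log (inactJ (blk n) (βs n) j) / n)) /
            Real.sqrt (Real.pi * Real.log (inactJ (blk n) (βs n) j)) +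
          Real.exp (-(n / 2) * ((βmin n j - τ n j) ^ 2 -
              2 * Real.log (actJ (blk n) (βs n) j) / n)) /
            Real.sqrt (Real.pi * Real.log (actJ (blk n) (βs n) j))) := by
  filter_upwards [eventually_all.mpr hA4, eventually_all.mpr hA5, eventually_ne_atTop 0]
    with n hA4n hA5n hn
  exact measureReal_selection_error_le (blk n) (βs n) (τ n) (βmin n) hn (βt n) (hmeas n)
    (hlaw n) (hτ n) (fun i ↦ (hβmin n (blk n i)).1 i rfl) (hcard n) hA4n hA5n

/-- **Theorem 3.4, first part.** In the Gaussian sequence model with block structure,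
under Assumptions A4 and A5 and with `p_j − s_j > 1` and `s_j > 1` for every block,
for every sufficiently large `n`:
`P(Ŝᵇ ≠ S) ≤ ∑_j [ e^{−(n/2)(τ_j² − 2 ln(p_j−s_j)/n)}/√(π ln(p_j−s_j))
                 + e^{−(n/2)((β*_{min,j} − τ_j)² − 2 ln(s_j)/n)}/√(π ln s_j) ]`. -/
theorem stmt9 (b : ℕ) (p : ℕ → ℕ)
    (blk : (n : ℕ) → Fin (p n) → Fin b)
    (βs : (n : ℕ) → Fin (p n) → ℝ)
    (τ : ℕ → Fin b → ℝ) (hτ : ∀ n j, 0 < τ n j)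
    (Ω : ℕ → Type) [∀ n, MeasurableSpace (Ω n)]
    (Pr : (n : ℕ) → Measure (Ω n)) [∀ n, IsProbabilityMeasure (Pr n)]
    (βt : (n : ℕ) → Fin (p n) → Ω n → ℝ)
    (hmeas : ∀ n i, Measurable (βt n i))
    (hindep : ∀ n, iIndepFun (βt n) (Pr n))
    (hlaw : ∀ n i, Measure.map (βt n i) (Pr n) =
      gaussianReal (βs n i) ((n : ℝ≥0))⁻¹)
    (βmin : ℕ → Fin b → ℝ)
    (hβmin : ∀ n j, (∀ i : Fin (p n), blk n i = j → βs n i ≠ 0 → βmin n j ≤ |βs n i|) ∧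
      ∃ i : Fin (p n), blk n i = j ∧ βs n i ≠ 0 ∧ βmin n j = |βs n i|)
    (hcard : ∀ n j, 1 < inactJ (blk n) (βs n) j ∧ 1 < actJ (blk n) (βs n) j)
    (hA4 : ∀ j, ∀ᶠ n : ℕ in atTop,
      Real.sqrt (2 * Real.log (inactJ (blk n) (βs n) j)) ≤ Real.sqrt n * τ n j)
    (hA5 : ∀ j, ∀ᶠ n : ℕ in atTop,
      Real.sqrt (2 * Real.log (actJ (blk n) (βs n) j)) ≤
        Real.sqrt n * (βmin n j - τ n j)) :
    ∀ᶠ n : ℕ in atTop,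
      (Pr n {ω | ¬ ∀ i : Fin (p n),
          (τ n (blk n i) < |βt n i ω| ↔ βs n i ≠ 0)}).toReal ≤
        ∑ j : Fin b,
          (Real.exp (-(n / 2) * (τ n j ^ 2 -
              2 * Real.log (inactJ (blk n) (βs n) j) / n)) /
            Real.sqrt (Real.pi * Real.log (inactJ (blk n) (βs n) j)) +
          Real.exp (-(n / 2) * ((βmin n j - τ n j) ^ 2 -
              2 * Real.log (actJ (blk n) (βs n) j) / n)) /
            Real.sqrt (Real.pi * Real.log (actJ (blk n) (βs n) j))) :=
  stmt9_general b p blk βs τ hτ Ω Pr βt hmeas hlaw βmin hβmin hcard hA4 hA5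
end

section
/- Let 𝓜 be a finite nonempty set, S ∈ 𝓜, and on a probability space let (C(M))_{M∈𝓜} be real-valued random variables. Define NC(M) = e^{C(M)} / Σ_{M'∈𝓜} e^{C(M')}, and let Ŝ^b be any 𝓜-valued random variable with NC(Ŝ^b) = max_{M∈𝓜} NC(M) almost surely. Then: (i) P(Ŝ^b ≠ S) ≤ 2 Σ_{M ∈ 𝓜∖{S}} E[NC(M)]; (ii) pointwise, for any two distinct M, M' ∈ 𝓜, NC(M) ≤ (1 + e^{C(M') − C(M)})^{-1}. (Lemma 4.2: the probability of incorrect selection is bounded by the expected total normalized score of incorrect models, and each normalized score is bounded via a pairwise comparison.) -/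
open MeasureTheory ProbabilityTheory Finset

/-! If `Ŝᵇ ≠ S` while `Ŝᵇ` maximizes the probability vector `NC`, then `NC(S) ≤ NC(Ŝᵇ)`, and both
summands of `1 = NC(S) + ∑_{M ≠ S} NC(M)` are at most the second one, so the event `Ŝᵇ ≠ S` lies
(almost surely) inside `{∑_{M ≠ S} NC(M) ≥ 1/2}`; Markov's inequality bounds the probability of
the latter. Part (ii) holds since the denominator of `NC(M)` is at least `e^{C(M)} + e^{C(M')}`. -/

theorem one_half_le_sum_erase_of_le {ι : Type*} [Fintype ι] [DecidableEq ι] {p : ι → ℝ}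
    (hp : ∀ i, 0 ≤ p i) (hsum : ∑ i, p i = 1) {i k : ι} (hki : k ≠ i) (hle : p i ≤ p k) :
    1 / 2 ≤ ∑ j ∈ univ.erase i, p j := by
  have hk : p k ≤ ∑ j ∈ univ.erase i, p j :=
    single_le_sum (fun j _ => hp j) (mem_erase.mpr ⟨hki, mem_univ k⟩)
  have hsplit : p i + ∑ j ∈ univ.erase i, p j = 1 := by
    rw [add_sum_erase _ _ (mem_univ i), hsum]
  linarith

theorem measureReal_ne_le_two_mul_sum_integral {Ω ι : Type*} [MeasurableSpace Ω]
    {P : Measure Ω} [IsFiniteMeasure P] [Fintype ι] [DecidableEq ι] (p : ι → Ω → ℝ)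
    (hp : ∀ i ω, 0 ≤ p i ω) (hsum : ∀ ω, ∑ i, p i ω = 1) (hint : ∀ i, Integrable (p i) P)
    (S : ι) (Shat : Ω → ι) (hmax : ∀ᵐ ω ∂P, ∀ i, p i ω ≤ p (Shat ω) ω) :
    P.real {ω | Shat ω ≠ S} ≤ 2 * ∑ i ∈ univ.erase S, ∫ ω, p i ω ∂P := by
  set rest : Ω → ℝ := fun ω => ∑ i ∈ univ.erase S, p i ω
  have hsub : {ω | Shat ω ≠ S} ≤ᵐ[P] {ω | 1 / 2 ≤ rest ω} := by
    filter_upwards [hmax] with ω hω hne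
    exact one_half_le_sum_erase_of_le (hp · ω) (hsum ω) hne (hω S)
  have hrest : Integrable rest P := integrable_finsetSum _ fun i _ => hint i
  have markov := mul_meas_ge_le_integral_of_nonneg
    (ae_of_all _ fun ω => sum_nonneg fun i _ => hp i ω) hrest (1 / 2)
  calc P.real {ω | Shat ω ≠ S}
      ≤ P.real {ω | 1 / 2 ≤ rest ω} := ENNReal.toReal_mono (measure_ne_top _ _)
        (measure_mono_ae hsub)
    _ ≤ 2 * ∫ ω, rest ω ∂P := by linarith
    _ = 2 * ∑ i ∈ univ.erase S, ∫ ω, p i ω ∂P := by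
      rw [integral_finsetSum _ fun i _ => hint i]

section Softmax

variable {ι : Type*} [Fintype ι]

noncomputable def softmax (c : ι → ℝ) (i : ι) : ℝ :=
  Real.exp (c i) / ∑ j, Real.exp (c j)

theorem softmax_nonneg (c : ι → ℝ) (i : ι) : 0 ≤ softmax c i := by
  unfold softmax; positivity

theorem sum_softmax [Nonempty ι] (c : ι → ℝ) : ∑ i, softmax c i = 1 := by
  have hpos : 0 < ∑ j, Real.exp (c j) := sum_pos (fun j _ => Real.exp_pos (c j)) univ_nonempty
  simp only [softmax]
  rw [← sum_div, div_self hpos.ne']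

theorem softmax_le_one (c : ι → ℝ) (i : ι) : softmax c i ≤ 1 := by
  have : Nonempty ι := ⟨i⟩
  rw [← sum_softmax c]
  exact single_le_sum (fun j _ => softmax_nonneg c j) (mem_univ i)

theorem softmax_le_inv_one_add_exp_sub [DecidableEq ι] (c : ι → ℝ) {i j : ι} (hij : i ≠ j) :
    softmax c i ≤ (1 + Real.exp (c j - c i))⁻¹ := by
  have hpair : Real.exp (c i) + Real.exp (c j) ≤ ∑ k, Real.exp (c k) := by
    rw [← sum_pair (f := fun k => Real.exp (c k)) hij]
    exact sum_le_sum_of_subset_of_nonneg (subset_univ _) fun k _ _ => (Real.exp_pos _).le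
  calc softmax c i
      ≤ Real.exp (c i) / (Real.exp (c i) + Real.exp (c j)) :=
        div_le_div_of_nonneg_left (Real.exp_pos _).le (by positivity) hpair
    _ = (1 + Real.exp (c j - c i))⁻¹ := by
      rw [Real.exp_sub]
      field_simp

theorem integrable_softmax {Ω : Type*} [MeasurableSpace Ω] {P : Measure Ω} [IsFiniteMeasure P]
    {C : ι → Ω → ℝ} (hC : ∀ i, Measurable (C i)) (i : ι) :
    Integrable (fun ω => softmax (fun j => C j ω) i) P := by
  refine Integrable.of_bound (C := 1) ?_ (ae_of_all _ fun ω => ?_)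
  · unfold softmax
    exact ((hC i).exp.div (Finset.measurable_sum _ fun j _ => (hC j).exp)).aestronglyMeasurable
  · rw [Real.norm_of_nonneg (softmax_nonneg _ i)]
    exact softmax_le_one _ i

end Softmax

theorem stmt14_general {Ω : Type*} [MeasurableSpace Ω] (P : Measure Ω) [IsProbabilityMeasure P]
    (𝓜 : Type*) [Fintype 𝓜] [DecidableEq 𝓜]
    (S : 𝓜) (C : 𝓜 → Ω → ℝ) (hC : ∀ M, Measurable (C M))
    (Shat : Ω → 𝓜)
    (hmax : ∀ᵐ ω ∂P, ∀ M : 𝓜,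
      Real.exp (C M ω) / ∑ M' : 𝓜, Real.exp (C M' ω) ≤
        Real.exp (C (Shat ω) ω) / ∑ M' : 𝓜, Real.exp (C M' ω)) :
    ((P {ω | Shat ω ≠ S}).toReal ≤
        2 * ∑ M ∈ Finset.univ.erase S,
          ∫ ω, Real.exp (C M ω) / ∑ M' : 𝓜, Real.exp (C M' ω) ∂P) ∧
      ∀ M M' : 𝓜, M ≠ M' → ∀ ω,
        Real.exp (C M ω) / ∑ M'' : 𝓜, Real.exp (C M'' ω) ≤
          (1 + Real.exp (C M' ω - C M ω))⁻¹ := by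
  have : Nonempty 𝓜 := ⟨S⟩
  refine ⟨?_, fun M M' hne ω => softmax_le_inv_one_add_exp_sub (fun j => C j ω) hne⟩
  exact measureReal_ne_le_two_mul_sum_integral (fun M ω => softmax (fun j => C j ω) M)
    (fun M ω => softmax_nonneg _ M) (fun ω => sum_softmax _) (integrable_softmax hC) S Shat hmax

/-- **Lemma 4.2.** Let `𝓜` be a finite nonempty set of models, `S ∈ 𝓜`, and let
`(C(M))_{M∈𝓜}` be real random variables. With
`NC(M) = e^{C(M)} / ∑_{M'} e^{C(M')}` and `Ŝᵇ` a random model maximizing `NC` a.s.: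
(i) `P(Ŝᵇ ≠ S) ≤ 2 ∑_{M ≠ S} E[NC(M)]`;
(ii) for any distinct `M, M'` and every `ω`, `NC(M) ≤ (1 + e^{C(M') − C(M)})⁻¹`. -/
theorem stmt14 {Ω : Type*} [MeasurableSpace Ω] (P : Measure Ω) [IsProbabilityMeasure P]
    (𝓜 : Type*) [Fintype 𝓜] [DecidableEq 𝓜] [Nonempty 𝓜]
    [MeasurableSpace 𝓜] [MeasurableSingletonClass 𝓜]
    (S : 𝓜) (C : 𝓜 → Ω → ℝ) (hC : ∀ M, Measurable (C M))
    (Shat : Ω → 𝓜) (hShat : Measurable Shat)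
    (hmax : ∀ᵐ ω ∂P, ∀ M : 𝓜,
      Real.exp (C M ω) / ∑ M' : 𝓜, Real.exp (C M' ω) ≤
        Real.exp (C (Shat ω) ω) / ∑ M' : 𝓜, Real.exp (C M' ω)) :
    ((P {ω | Shat ω ≠ S}).toReal ≤
        2 * ∑ M ∈ Finset.univ.erase S,
          ∫ ω, Real.exp (C M ω) / ∑ M' : 𝓜, Real.exp (C M' ω) ∂P) ∧
      ∀ M M' : 𝓜, M ≠ M' → ∀ ω,
        Real.exp (C M ω) / ∑ M'' : 𝓜, Real.exp (C M'' ω) ≤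
          (1 + Real.exp (C M' ω - C M ω))⁻¹ :=
  stmt14_general P 𝓜 S C hC Shat hmax
end

section
/- Let X ∈ ℝ^{n×p}, let {1,…,p} be partitioned into blocks B_1,…,B_b, let β* ∈ ℝ^p with support S = {i : β*_i ≠ 0}, S_j = S ∩ B_j, β*_{min,j} = min_{i∈S_j}|β*_i|, and let 𝓜 be a collection of subsets M with X_M of full column rank such that {M' ∈ 𝓜 : M' ⊉ S} is nonempty. Define ρ(X) = min_{M' ∈ 𝓜, M' ⊉ S} λ_min( (1/n) X_{S∖M'}ᵀ (I_n − P_{M'}) X_{S∖M'} ), where P_M = X_M (X_Mᵀ X_M)^{-1} X_Mᵀ. Then for any M ∈ 𝓜, with Q_S = S ∪ M, the non-centrality quantity μ_{Q_S M} = ‖(I_n − P_M) X_{Q_S∖M} β*_{Q_S∖M}‖² satisfies μ_{Q_S M} ≥ n · ρ(X) · Σ_{j=1}^b |S_j ∖ M_j| · (β*_{min,j})². (Lemma 4.4: eigenvalue lower bound on the non-centrality parameter.) -/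
/-!
Let `x = β*_{S∖M}` and `B = I - P_M`. Full column rank of `X_M` makes `B` a symmetric idempotent,
so `μ = ‖B X_{S∖M} x‖² = xᵀ (X_{S∖M}ᵀ B X_{S∖M}) x`, and the Rayleigh-quotient bound gives
`μ ≥ n λ_min((1/n) X_{S∖M}ᵀ B X_{S∖M}) ‖x‖² ≥ n ρ(X) ‖x‖²` (when `S ⊆ M`, `x` is empty and
there is nothing to prove). Grouping the coordinates of `x` by block,
`‖x‖² ≥ ∑_j |S_j ∖ M_j| (β*_{min,j})²`.
-/

open Finset Matrix

/-- The submatrix of `X` consisting of the columns indexed by `M`. -/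
noncomputable def colsub {N P : ℕ} (X : Matrix (Fin N) (Fin P) ℝ) (M : Finset (Fin P)) :
    Matrix (Fin N) {i // i ∈ M} ℝ := fun r c => X r c.1

/-- The orthogonal projection `P_M = X_M (X_Mᵀ X_M)⁻¹ X_Mᵀ` onto the column span of `X_M`. -/
noncomputable def projM {N P : ℕ} (X : Matrix (Fin N) (Fin P) ℝ) (M : Finset (Fin P)) :
    Matrix (Fin N) (Fin N) ℝ :=
  colsub X M * ((colsub X M)ᵀ * colsub X M)⁻¹ * (colsub X M)ᵀ

/-- The smallest eigenvalue of a symmetric real matrix, via its Rayleigh-quotient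
(Courant–Fischer) characterization. -/
noncomputable def lammin {m : Type*} [Fintype m] (A : Matrix m m ℝ) : ℝ :=
  sInf {r : ℝ | ∃ x : m → ℝ, ∑ i, x i ^ 2 = 1 ∧ r = ∑ i, ∑ k, x i * A i k * x k}

/-- The restricted-eigenvalue quantity
`ρ(X) = min_{M ∈ 𝓜, M ⊉ S} λ_min((1/n) X_{S∖M}ᵀ (I − P_M) X_{S∖M})`. -/
noncomputable def rhoX {N P : ℕ} (X : Matrix (Fin N) (Fin P) ℝ)
    (𝓜 : Finset (Finset (Fin P))) (S : Finset (Fin P)) : ℝ :=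
  sInf {r : ℝ | ∃ M ∈ 𝓜, ¬ S ⊆ M ∧
    r = lammin ((N : ℝ)⁻¹ •
      ((colsub X (S \ M))ᵀ * (1 - projM X M) * colsub X (S \ M)))}

section Rayleigh

variable {m : Type*} [Fintype m]

lemma sum_sum_mul_mul_eq_dotProduct_mulVec (A : Matrix m m ℝ) (x : m → ℝ) :
    ∑ i, ∑ k, x i * A i k * x k = x ⬝ᵥ (A *ᵥ x) := by
  simp only [dotProduct, mulVec, Finset.mul_sum, mul_assoc]

lemma lammin_nonneg {A : Matrix m m ℝ} (hA : A.PosSemidef) : 0 ≤ lammin A :=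
  Real.sInf_nonneg fun _ ⟨x, _, hr⟩ => by
    simpa [hr, sum_sum_mul_mul_eq_dotProduct_mulVec] using hA.dotProduct_mulVec_nonneg x

lemma lammin_mul_sum_sq_le {A : Matrix m m ℝ} (hA : A.PosSemidef) (x : m → ℝ) :
    lammin A * ∑ i, x i ^ 2 ≤ x ⬝ᵥ (A *ᵥ x) := by
  have hq : ∀ y : m → ℝ, 0 ≤ y ⬝ᵥ (A *ᵥ y) := by simpa using hA.dotProduct_mulVec_nonneg
  set t := ∑ i, x i ^ 2
  have ht0 : 0 ≤ t := Finset.sum_nonneg fun i _ => sq_nonneg (x i)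
  rcases ht0.eq_or_lt with ht | ht
  · rw [← ht, mul_zero]
    exact hq x
  set c := (√t)⁻¹
  have hc : c ^ 2 = t⁻¹ := by rw [inv_pow, Real.sq_sqrt ht0]
  have hunit : ∑ i, (c • x) i ^ 2 = 1 := by
    simp only [Pi.smul_apply, smul_eq_mul, mul_pow, ← Finset.mul_sum, hc]
    exact inv_mul_cancel₀ ht.ne'
  have hle : lammin A ≤ (c • x) ⬝ᵥ (A *ᵥ (c • x)) := by
    refine csInf_le ⟨0, fun _ ⟨y, _, hr⟩ => ?_⟩ ⟨c • x, hunit, ?_⟩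
    · rw [hr, sum_sum_mul_mul_eq_dotProduct_mulVec]
      exact hq y
    · rw [sum_sum_mul_mul_eq_dotProduct_mulVec]
  rw [mulVec_smul, smul_dotProduct, dotProduct_smul, smul_eq_mul, smul_eq_mul, ← mul_assoc,
    ← sq, hc] at hle
  calc lammin A * t ≤ t⁻¹ * (x ⬝ᵥ (A *ᵥ x)) * t := by gcongr
    _ = x ⬝ᵥ (A *ᵥ x) := by field_simp

lemma mul_lammin_inv_smul_mul_sum_sq_le {G : Matrix m m ℝ} (hG : G.PosSemidef) {c : ℝ}
    (hc : 0 ≤ c) (x : m → ℝ) :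
    c * lammin (c⁻¹ • G) * ∑ i, x i ^ 2 ≤ x ⬝ᵥ (G *ᵥ x) := by
  rcases hc.eq_or_lt with rfl | hc
  · simpa using hG.dotProduct_mulVec_nonneg x
  have h := lammin_mul_sum_sq_le (hG.smul (inv_nonneg.mpr hc.le)) x
  rw [smul_mulVec, dotProduct_smul, smul_eq_mul] at h
  calc c * lammin (c⁻¹ • G) * ∑ i, x i ^ 2 ≤ c * (c⁻¹ * x ⬝ᵥ (G *ᵥ x)) := by
        rw [mul_assoc]; gcongr
    _ = x ⬝ᵥ (G *ᵥ x) := by field_simp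

end Rayleigh

section Projection

variable {n m : Type*} [Fintype n] [Fintype m] [DecidableEq m]

lemma isUnit_det_transpose_mul_self {C : Matrix n m ℝ} (hC : LinearIndependent ℝ C.col) :
    IsUnit (Cᵀ * C).det := by
  rw [← isUnit_iff_isUnit_det]
  simpa using (PosDef.conjTranspose_mul_self C (mulVec_injective_iff.mpr hC)).isUnit

/-- `BᵀB = B` says at once that `B` is symmetric and idempotent. -/
lemma one_sub_proj_transpose_mul_self [DecidableEq n] {C : Matrix n m ℝ}
    (hC : LinearIndependent ℝ C.col) :
    (1 - C * (Cᵀ * C)⁻¹ * Cᵀ)ᵀ * (1 - C * (Cᵀ * C)⁻¹ * Cᵀ) = 1 - C * (Cᵀ * C)⁻¹ * Cᵀ := by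
  have hsymm : (C * (Cᵀ * C)⁻¹ * Cᵀ)ᵀ = C * (Cᵀ * C)⁻¹ * Cᵀ := by
    rw [transpose_mul, transpose_mul, transpose_transpose, transpose_nonsing_inv,
      transpose_mul, transpose_transpose, Matrix.mul_assoc]
  have hidem : C * (Cᵀ * C)⁻¹ * Cᵀ * (C * (Cᵀ * C)⁻¹ * Cᵀ) = C * (Cᵀ * C)⁻¹ * Cᵀ := by
    simp only [Matrix.mul_assoc]
    rw [← Matrix.mul_assoc Cᵀ C,
      nonsing_inv_mul_cancel_left _ _ (isUnit_det_transpose_mul_self hC)]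
  rw [transpose_sub, transpose_one, hsymm, Matrix.sub_mul, Matrix.mul_sub, Matrix.mul_sub,
    Matrix.one_mul, Matrix.one_mul, Matrix.mul_one, hidem, sub_self, sub_zero]

end Projection

section Idempotent

variable {n m : Type*} [Fintype n] [Fintype m] {B : Matrix n n ℝ}

lemma posSemidef_transpose_mul_mul (hB : Bᵀ * B = B) (C : Matrix n m ℝ) :
    (Cᵀ * B * C).PosSemidef := by
  have hBpsd : B.PosSemidef := hB ▸ posSemidef_conjTranspose_mul_self B
  exact hBpsd.conjTranspose_mul_mul_same C

lemma dotProduct_transpose_mul_mul_mulVec (hB : Bᵀ * B = B) (C : Matrix n m ℝ) (x : m → ℝ) :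
    x ⬝ᵥ ((Cᵀ * B * C) *ᵥ x) = ∑ r, ((B *ᵥ (C *ᵥ x)) r) ^ 2 := by
  conv_lhs => rw [← hB]
  rw [Matrix.mul_assoc, ← mulVec_mulVec, ← mulVec_mulVec, dotProduct_mulVec, vecMul_transpose,
    ← mulVec_mulVec, dotProduct_mulVec, vecMul_transpose]
  simp only [dotProduct, sq]

end Idempotent

section Residual

variable {N P : ℕ} {X : Matrix (Fin N) (Fin P) ℝ}

lemma one_sub_projM_transpose_mul_self {M : Finset (Fin P)}
    (hM : LinearIndependent ℝ (colsub X M).col) :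
    (1 - projM X M)ᵀ * (1 - projM X M) = 1 - projM X M :=
  one_sub_proj_transpose_mul_self hM

lemma lammin_residual_nonneg {M : Finset (Fin P)} (hM : LinearIndependent ℝ (colsub X M).col)
    (D : Finset (Fin P)) :
    0 ≤ lammin ((N : ℝ)⁻¹ • ((colsub X D)ᵀ * (1 - projM X M) * colsub X D)) :=
  lammin_nonneg <| (posSemidef_transpose_mul_mul (one_sub_projM_transpose_mul_self hM) _).smul
    (by positivity)

variable {𝓜 : Finset (Finset (Fin P))}

lemma rhoX_nonneg (hrank : ∀ M ∈ 𝓜, LinearIndependent ℝ (colsub X M).col) (S : Finset (Fin P)) :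
    0 ≤ rhoX X 𝓜 S :=
  Real.sInf_nonneg fun _ ⟨M, hM, _, hr⟩ => hr ▸ lammin_residual_nonneg (hrank M hM) _

lemma rhoX_le_lammin (hrank : ∀ M ∈ 𝓜, LinearIndependent ℝ (colsub X M).col)
    {S M : Finset (Fin P)} (hM : M ∈ 𝓜) (hSM : ¬ S ⊆ M) :
    rhoX X 𝓜 S ≤
      lammin ((N : ℝ)⁻¹ • ((colsub X (S \ M))ᵀ * (1 - projM X M) * colsub X (S \ M))) :=
  csInf_le ⟨0, fun _ ⟨M', hM', _, hr⟩ => hr ▸ lammin_residual_nonneg (hrank M' hM') _⟩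
    ⟨M, hM, hSM, rfl⟩

end Residual

lemma mulVec_ite_mem_eq_colsub_mulVec {N P : ℕ} (X : Matrix (Fin N) (Fin P) ℝ)
    (D : Finset (Fin P)) (β : Fin P → ℝ) :
    (X *ᵥ fun i => if i ∈ D then β i else 0) = colsub X D *ᵥ fun i => β i := by
  ext r
  simp only [mulVec, dotProduct, colsub, mul_ite, mul_zero, Finset.sum_ite_mem,
    Finset.univ_inter]
  exact (Finset.sum_coe_sort D fun i => X r i * β i).symm

section Blocks

variable {ι κ : Type*} (β : ι → ℝ) (blk : ι → κ)

lemma sInf_abs_sq_le_sq {i : ι} {j : κ} (hj : blk i = j) (hi : β i ≠ 0) :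
    sInf {x : ℝ | ∃ i', blk i' = j ∧ β i' ≠ 0 ∧ x = |β i'|} ^ 2 ≤ β i ^ 2 := by
  have hbdd : ∀ x ∈ {x : ℝ | ∃ i', blk i' = j ∧ β i' ≠ 0 ∧ x = |β i'|}, 0 ≤ x :=
    fun _ ⟨_, _, _, hx⟩ => hx ▸ abs_nonneg _
  rw [← sq_abs (β i)]
  exact pow_le_pow_left₀ (Real.sInf_nonneg hbdd) (csInf_le ⟨0, hbdd⟩ ⟨i, hj, hi, rfl⟩) 2

lemma sum_card_mul_sInf_sq_le [Fintype ι] [DecidableEq ι] [Fintype κ] [DecidableEq κ]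
    (M : Finset ι) :
    ∑ j, ((univ.filter fun i => blk i = j ∧ β i ≠ 0) \ M).card *
        sInf {x : ℝ | ∃ i, blk i = j ∧ β i ≠ 0 ∧ x = |β i|} ^ 2 ≤
      ∑ i ∈ (univ.filter fun i => β i ≠ 0) \ M, β i ^ 2 := by
  rw [← Finset.sum_fiberwise _ blk]
  gcongr with j
  have hfiber : ((univ.filter fun i => β i ≠ 0) \ M).filter (fun i => blk i = j) =
      (univ.filter fun i => blk i = j ∧ β i ≠ 0) \ M := by
    ext i
    simp only [Finset.mem_filter, Finset.mem_sdiff, Finset.mem_univ, true_and]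
    tauto
  rw [hfiber, ← nsmul_eq_mul]
  refine Finset.card_nsmul_le_sum _ _ _ fun i hi => ?_
  simp only [Finset.mem_sdiff, Finset.mem_filter, Finset.mem_univ, true_and] at hi
  exact sInf_abs_sq_le_sq β blk hi.1.1 hi.1.2

end Blocks

theorem stmt15_general {N P : ℕ} (b : ℕ) (X : Matrix (Fin N) (Fin P) ℝ) (blk : Fin P → Fin b)
    (βs : Fin P → ℝ)
    (𝓜 : Finset (Finset (Fin P)))
    (hrank : ∀ M ∈ 𝓜, LinearIndependent ℝ (fun c : {i // i ∈ M} => fun r => X r c.1))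
    (M : Finset (Fin P)) (hM : M ∈ 𝓜) :
    (N : ℝ) * rhoX X 𝓜 (Finset.univ.filter (fun i => βs i ≠ 0)) *
        ∑ j : Fin b,
          ((((Finset.univ.filter (fun i => blk i = j ∧ βs i ≠ 0)) \ M).card : ℝ) *
            (sInf {x : ℝ | ∃ i, blk i = j ∧ βs i ≠ 0 ∧ x = |βs i|}) ^ 2) ≤
      ∑ r, (((1 - projM X M) *ᵥ (X *ᵥ fun i =>
          if i ∈ (Finset.univ.filter (fun i' => βs i' ≠ 0)) \ M then βs i else 0)) r) ^ 2 := by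
  set S := Finset.univ.filter (fun i => βs i ≠ 0)
  set C := colsub X (S \ M)
  set x : {i // i ∈ S \ M} → ℝ := fun i => βs i
  have hnorm : ∑ i, x i ^ 2 = ∑ i ∈ S \ M, βs i ^ 2 := Finset.sum_coe_sort _ fun i => βs i ^ 2
  have hρ : rhoX X 𝓜 S * ∑ i, x i ^ 2 ≤
      lammin ((N : ℝ)⁻¹ • (Cᵀ * (1 - projM X M) * C)) * ∑ i, x i ^ 2 := by
    by_cases hSM : S ⊆ M
    · have hx : ∑ i, x i ^ 2 = 0 := by
        rw [hnorm, Finset.sdiff_eq_empty_iff_subset.mpr hSM, Finset.sum_empty]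
      rw [hx, mul_zero, mul_zero]
    · exact mul_le_mul_of_nonneg_right (rhoX_le_lammin hrank hM hSM)
        (Finset.sum_nonneg fun i _ => sq_nonneg (x i))
  have hB := one_sub_projM_transpose_mul_self (hrank M hM)
  calc _ ≤ (N : ℝ) * rhoX X 𝓜 S * ∑ i, x i ^ 2 := by
        rw [hnorm]
        exact mul_le_mul_of_nonneg_left (sum_card_mul_sInf_sq_le βs blk M)
          (mul_nonneg N.cast_nonneg (rhoX_nonneg hrank S))
    _ ≤ (N : ℝ) * lammin ((N : ℝ)⁻¹ • (Cᵀ * (1 - projM X M) * C)) * ∑ i, x i ^ 2 := by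
        simp only [mul_assoc]
        exact mul_le_mul_of_nonneg_left hρ N.cast_nonneg
    _ ≤ x ⬝ᵥ ((Cᵀ * (1 - projM X M) * C) *ᵥ x) :=
        mul_lammin_inv_smul_mul_sum_sq_le (posSemidef_transpose_mul_mul hB C) N.cast_nonneg x
    _ = _ := by
        rw [dotProduct_transpose_mul_mul_mulVec hB, mulVec_ite_mem_eq_colsub_mulVec]

/-- **Lemma 4.4.** For any model `M ∈ 𝓜`, with `Q_S = S ∪ M`, the non-centrality
quantity `μ_{Q_S M} = ‖(I − P_M) X_{Q_S∖M} β*_{Q_S∖M}‖²` satisfies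
`μ_{Q_S M} ≥ n ρ(X) ∑_j |S_j ∖ M_j| (β*_{min,j})²` (here `Q_S ∖ M = S ∖ M`). -/
theorem stmt15 {N P : ℕ} (b : ℕ) (X : Matrix (Fin N) (Fin P) ℝ) (blk : Fin P → Fin b)
    (βs : Fin P → ℝ)
    (𝓜 : Finset (Finset (Fin P)))
    (hrank : ∀ M ∈ 𝓜, LinearIndependent ℝ (fun c : {i // i ∈ M} => fun r => X r c.1))
    (hne : ∃ M ∈ 𝓜, ¬ (Finset.univ.filter (fun i => βs i ≠ 0)) ⊆ M)
    (M : Finset (Fin P)) (hM : M ∈ 𝓜) :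
    (N : ℝ) * rhoX X 𝓜 (Finset.univ.filter (fun i => βs i ≠ 0)) *
        ∑ j : Fin b,
          ((((Finset.univ.filter (fun i => blk i = j ∧ βs i ≠ 0)) \ M).card : ℝ) *
            (sInf {x : ℝ | ∃ i, blk i = j ∧ βs i ≠ 0 ∧ x = |βs i|}) ^ 2) ≤
      ∑ r, (((1 - projM X M) *ᵥ (X *ᵥ fun i =>
          if i ∈ (Finset.univ.filter (fun i' => βs i' ≠ 0)) \ M then βs i else 0)) r) ^ 2 :=
  stmt15_general b X blk βs 𝓜 hrank M hM
end

section
/- Let X ∈ ℝ^{n×p}, let {1,…,p} be partitioned into blocks B_1,…,B_b, and let β* ∈ ℝ^p with support S = {i : β*_i ≠ 0}, S_j = S ∩ B_j. Assume X_S has full column rank, let T ⊆ S be such that X_T has full column rank, set T_j = T ∩ B_j, P_T = X_T(X_Tᵀ X_T)^{-1}X_Tᵀ, and μ_{ST} = ‖(I_n − P_T) X_{S∖T} β*_{S∖T}‖². Then μ_{ST} ≤ n · λ̄ · Σ_{j=1}^b |S_j ∖ T_j| · max_{i ∈ S_j∖T_j} (β*_i)², where λ̄ = λ_max( (1/n)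 X_Sᵀ X_S ). (Lemma 4.7: upper bound on the non-centrality parameter of under-fitted models by the largest missed signals.) -/
open Finset Matrix

/-- The largest eigenvalue of a symmetric real matrix, via its Rayleigh-quotient
(Courant–Fischer) characterization. -/
noncomputable def lammax {m : Type*} [Fintype m] (A : Matrix m m ℝ) : ℝ :=
  sSup {r : ℝ | ∃ x : m → ℝ, ∑ i, x i ^ 2 = 1 ∧ r = ∑ i, ∑ k, x i * A i k * x k}

lemma sum_sq_eq_dotProduct_self {m : Type*} [Fintype m] (y : m → ℝ) : ∑ i, y i ^ 2 = y ⬝ᵥ y := by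
  simp only [dotProduct, sq]

lemma dotProduct_self_nonneg {m : Type*} [Fintype m] (y : m → ℝ) : 0 ≤ y ⬝ᵥ y := by
  simpa using dotProduct_star_self_nonneg y

section Projection

variable {n ι : Type*} [Fintype n] [Fintype ι]

lemma dotProduct_mulVec_self_of_isSymm_of_isIdempotentElem {Q : Matrix n n ℝ} (hsymm : Q.IsSymm)
    (hidem : IsIdempotentElem Q) (u : n → ℝ) : (Q *ᵥ u) ⬝ᵥ (Q *ᵥ u) = u ⬝ᵥ (Q *ᵥ u) := by
  rw [dotProduct_mulVec, ← mulVec_transpose, hsymm.eq, mulVec_mulVec, hidem.eq, dotProduct_comm]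

lemma dotProduct_mulVec_self_le_of_isSymm_of_isIdempotentElem [DecidableEq n] {Q : Matrix n n ℝ}
    (hsymm : Q.IsSymm) (hidem : IsIdempotentElem Q) (u : n → ℝ) :
    (Q *ᵥ u) ⬝ᵥ (Q *ᵥ u) ≤ u ⬝ᵥ u := by
  have hQ := dotProduct_mulVec_self_of_isSymm_of_isIdempotentElem hsymm hidem u
  have hQc := dotProduct_mulVec_self_of_isSymm_of_isIdempotentElem (isSymm_one.sub hsymm)
    hidem.one_sub u
  have hnonneg := dotProduct_self_nonneg ((1 - Q) *ᵥ u)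
  rw [hQc, sub_mulVec, one_mulVec, dotProduct_sub] at hnonneg
  linarith

lemma isSymm_hat [DecidableEq ι] (M : Matrix n ι ℝ) : (M * (Mᵀ * M)⁻¹ * Mᵀ).IsSymm := by
  have hG : (Mᵀ * M).IsSymm := by simp [IsSymm, transpose_mul]
  simp only [IsSymm, transpose_mul, transpose_transpose, transpose_nonsing_inv, hG.eq,
    Matrix.mul_assoc]

lemma isIdempotentElem_hat [DecidableEq ι] {M : Matrix n ι ℝ} (hM : Function.Injective M.mulVec) :
    IsIdempotentElem (M * (Mᵀ * M)⁻¹ * Mᵀ) := by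
  have hdet : IsUnit (Mᵀ * M).det :=
    (isUnit_iff_isUnit_det _).mp (by simpa using (PosDef.conjTranspose_mul_self M hM).isUnit)
  calc M * (Mᵀ * M)⁻¹ * Mᵀ * (M * (Mᵀ * M)⁻¹ * Mᵀ)
      = M * ((Mᵀ * M)⁻¹ * (Mᵀ * M)) * (Mᵀ * M)⁻¹ * Mᵀ := by simp only [Matrix.mul_assoc]
    _ = M * (Mᵀ * M)⁻¹ * Mᵀ := by rw [nonsing_inv_mul _ hdet, Matrix.mul_one]

end Projection

section Rayleigh

variable {m : Type*} [Fintype m]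

lemma bddAbove_rayleigh (A : Matrix m m ℝ) :
    BddAbove {r : ℝ | ∃ x : m → ℝ, ∑ i, x i ^ 2 = 1 ∧ r = ∑ i, ∑ k, x i * A i k * x k} := by
  refine ⟨∑ i, ∑ k, |A i k|, ?_⟩
  rintro r ⟨x, hx, rfl⟩
  have hx1 : ∀ i, |x i| ≤ 1 := fun i => by
    rw [← sq_le_one_iff_abs_le_one, ← hx]
    exact single_le_sum (fun k _ => sq_nonneg (x k)) (mem_univ i)
  gcongr with i _ k _
  calc x i * A i k * x k ≤ |x i| * |A i k| * |x k| := by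
        rw [← abs_mul, ← abs_mul]; exact le_abs_self _
    _ ≤ 1 * |A i k| * 1 := by gcongr; exacts [hx1 i, hx1 k]
    _ = |A i k| := by ring

lemma rayleigh_le_lammax (A : Matrix m m ℝ) {x : m → ℝ} (hx : ∑ i, x i ^ 2 = 1) :
    x ⬝ᵥ (A *ᵥ x) ≤ lammax A :=
  le_csSup (bddAbove_rayleigh A) ⟨x, hx, (sum_sum_mul_mul_eq_dotProduct_mulVec A x).symm⟩

lemma dotProduct_mulVec_le_lammax_mul (A : Matrix m m ℝ) (x : m → ℝ) :
    x ⬝ᵥ (A *ᵥ x) ≤ lammax A * (x ⬝ᵥ x) := by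
  rcases (dotProduct_self_nonneg x).eq_or_lt with h0 | hpos
  · rw [← h0, dotProduct_self_eq_zero.mp h0.symm]
    simp
  have hcc : (√(x ⬝ᵥ x))⁻¹ * (√(x ⬝ᵥ x))⁻¹ = (x ⬝ᵥ x)⁻¹ := by
    rw [← mul_inv, Real.mul_self_sqrt hpos.le]
  have hunit : ∑ i, ((√(x ⬝ᵥ x))⁻¹ • x) i ^ 2 = 1 := by
    rw [sum_sq_eq_dotProduct_self, smul_dotProduct, dotProduct_smul, smul_eq_mul, smul_eq_mul,
      ← mul_assoc, hcc, inv_mul_cancel₀ hpos.ne']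
  have h := rayleigh_le_lammax A hunit
  rw [mulVec_smul, smul_dotProduct, dotProduct_smul, smul_eq_mul, smul_eq_mul, ← mul_assoc, hcc,
    inv_mul_le_iff₀ hpos] at h
  linarith

lemma lammax_nonneg_of_posSemidef {A : Matrix m m ℝ} (hA : A.PosSemidef) : 0 ≤ lammax A :=
  Real.sSup_nonneg <| by
    rintro r ⟨x, -, rfl⟩
    simpa [sum_sum_mul_mul_eq_dotProduct_mulVec] using hA.dotProduct_mulVec_nonneg x

end Rayleigh

lemma dotProduct_mulVec_self_le_lammax_gram {N : ℕ} {ι : Type*} [Fintype ι]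
    (M : Matrix (Fin N) ι ℝ) (w : ι → ℝ) :
    (M *ᵥ w) ⬝ᵥ (M *ᵥ w) ≤ N * lammax ((N : ℝ)⁻¹ • (Mᵀ * M)) * (w ⬝ᵥ w) := by
  rcases N.eq_zero_or_pos with rfl | hN
  · simp [dotProduct]
  have hgram : (M *ᵥ w) ⬝ᵥ (M *ᵥ w) = N * (w ⬝ᵥ (((N : ℝ)⁻¹ • (Mᵀ * M)) *ᵥ w)) := by
    rw [smul_mulVec, dotProduct_smul, smul_eq_mul, ← mul_assoc,
      mul_inv_cancel₀ (by positivity), one_mul, ← mulVec_mulVec, dotProduct_mulVec w,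
      vecMul_transpose]
  rw [hgram, mul_assoc]
  gcongr
  exact dotProduct_mulVec_le_lammax_mul _ _

lemma sum_le_sum_card_mul_sSup {α ι : Type*} [Fintype ι] [DecidableEq ι] (s : Finset α)
    (blk : α → ι) (f : α → ℝ) :
    ∑ i ∈ s, f i ≤ ∑ j, (#(s.filter (blk · = j)) : ℝ) * sSup {x | ∃ i ∈ s, blk i = j ∧ x = f i} := by
  rw [← sum_fiberwise s blk f]
  gcongr with j
  have hbdd : BddAbove {x | ∃ i ∈ s, blk i = j ∧ x = f i} :=
    ((s.finite_toSet.image f).subset (by rintro x ⟨i, hi, -, rfl⟩; exact ⟨i, hi, rfl⟩)).bddAbove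
  simpa using sum_le_card_nsmul _ f _ fun i hi =>
    le_csSup hbdd ⟨i, (mem_filter.1 hi).1, (mem_filter.1 hi).2, rfl⟩

lemma mulVec_eq_colsub_mulVec {N P : ℕ} (X : Matrix (Fin N) (Fin P) ℝ) {M : Finset (Fin P)}
    {v : Fin P → ℝ} (hv : ∀ i ∉ M, v i = 0) : X *ᵥ v = colsub X M *ᵥ fun c => v c := by
  funext r
  simp only [mulVec, dotProduct, colsub]
  rw [sum_coe_sort M (fun i => X r i * v i)]
  exact (sum_subset (subset_univ M) fun i _ hi => by rw [hv i hi, mul_zero]).symm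

theorem stmt16_general {N P : ℕ} (b : ℕ) (X : Matrix (Fin N) (Fin P) ℝ) (blk : Fin P → Fin b)
    (βs : Fin P → ℝ)
    (T : Finset (Fin P))
    (hrankT : LinearIndependent ℝ (fun c : {i // i ∈ T} => fun r => X r c.1)) :
    ∑ r, (((1 - projM X T) *ᵥ (X *ᵥ fun i =>
        if i ∈ (Finset.univ.filter (fun i' => βs i' ≠ 0)) \ T then βs i else 0)) r) ^ 2 ≤
      (N : ℝ) *
        lammax ((N : ℝ)⁻¹ •
          ((colsub X (Finset.univ.filter (fun i => βs i ≠ 0)))ᵀ *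
            colsub X (Finset.univ.filter (fun i => βs i ≠ 0)))) *
        ∑ j : Fin b,
          ((((Finset.univ.filter (fun i => blk i = j ∧ βs i ≠ 0)) \ T).card : ℝ) *
            sSup {x : ℝ | ∃ i, blk i = j ∧ βs i ≠ 0 ∧ i ∉ T ∧ x = βs i ^ 2}) := by
  set S := Finset.univ.filter (fun i => βs i ≠ 0)
  set v : Fin P → ℝ := fun i => if i ∈ S \ T then βs i else 0
  have hXv : X *ᵥ v = colsub X S *ᵥ fun c => v c :=
    mulVec_eq_colsub_mulVec X fun i hi => if_neg fun h => hi (mem_sdiff.1 h).1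
  have hv : ((fun c : S => v c) ⬝ᵥ fun c => v c) = ∑ i ∈ S \ T, βs i ^ 2 := by
    rw [← sum_sq_eq_dotProduct_self, sum_coe_sort S (fun i => v i ^ 2),
      ← sum_subset (sdiff_subset : S \ T ⊆ S) fun i _ hi => by simp only [v, if_neg hi]; ring]
    exact sum_congr rfl fun i hi => by simp only [v, if_pos hi]
  have hlam : 0 ≤ lammax ((N : ℝ)⁻¹ • ((colsub X S)ᵀ * colsub X S)) :=
    lammax_nonneg_of_posSemidef ((posSemidef_conjTranspose_mul_self (colsub X S)).smul
      (by positivity))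
  rw [sum_sq_eq_dotProduct_self]
  calc ((1 - projM X T) *ᵥ (X *ᵥ v)) ⬝ᵥ ((1 - projM X T) *ᵥ (X *ᵥ v))
      ≤ (X *ᵥ v) ⬝ᵥ (X *ᵥ v) :=
        dotProduct_mulVec_self_le_of_isSymm_of_isIdempotentElem (isSymm_one.sub (isSymm_hat _))
          (isIdempotentElem_hat (mulVec_injective_iff.mpr hrankT)).one_sub _
    _ ≤ N * lammax ((N : ℝ)⁻¹ • ((colsub X S)ᵀ * colsub X S)) * ∑ i ∈ S \ T, βs i ^ 2 := by
        rw [hXv, ← hv]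
        exact dotProduct_mulVec_self_le_lammax_gram _ _
    _ ≤ _ := by
        gcongr
        refine (sum_le_sum_card_mul_sSup (S \ T) blk fun i => βs i ^ 2).trans_eq
          (sum_congr rfl fun j _ => ?_)
        congr 2
        · congr 1
          ext i
          simp only [S, mem_filter, mem_sdiff, mem_univ, true_and]
          tauto
        · ext x
          simp only [S, Set.mem_ofPred_eq, mem_sdiff, mem_filter, mem_univ, true_and, and_assoc]
          exact exists_congr fun i => by tauto

/-- **Lemma 4.7.** For `T ⊆ S` with `X_T` and `X_S` of full column rank, the
non-centrality quantity `μ_{ST} = ‖(I − P_T) X_{S∖T} β*_{S∖T}‖²` satisfies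
`μ_{ST} ≤ n λ̄ ∑_j |S_j ∖ T_j| max_{i ∈ S_j∖T_j} (β*_i)²`, where
`λ̄ = λ_max((1/n) X_Sᵀ X_S)`. -/
theorem stmt16 {N P : ℕ} (b : ℕ) (X : Matrix (Fin N) (Fin P) ℝ) (blk : Fin P → Fin b)
    (βs : Fin P → ℝ)
    (T : Finset (Fin P))
    (hTS : T ⊆ Finset.univ.filter (fun i => βs i ≠ 0))
    (hrankT : LinearIndependent ℝ (fun c : {i // i ∈ T} => fun r => X r c.1))
    (hrankS : LinearIndependent ℝ
      (fun c : {i // i ∈ Finset.univ.filter (fun i' => βs i' ≠ 0)} => fun r => X r c.1)) :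
    ∑ r, (((1 - projM X T) *ᵥ (X *ᵥ fun i =>
        if i ∈ (Finset.univ.filter (fun i' => βs i' ≠ 0)) \ T then βs i else 0)) r) ^ 2 ≤
      (N : ℝ) *
        lammax ((N : ℝ)⁻¹ •
          ((colsub X (Finset.univ.filter (fun i => βs i ≠ 0)))ᵀ *
            colsub X (Finset.univ.filter (fun i => βs i ≠ 0)))) *
        ∑ j : Fin b,
          ((((Finset.univ.filter (fun i => blk i = j ∧ βs i ≠ 0)) \ T).card : ℝ) *
            sSup {x : ℝ | ∃ i, blk i = j ∧ βs i ≠ 0 ∧ i ∉ T ∧ x = βs i ^ 2}) :=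
  stmt16_general b X blk βs T hrankT
end

section
/- Let ν ≥ 1 be an integer, let Z_1,…,Z_ν be independent standard normal random variables, let m ∈ ℝ^ν with μ = ‖m‖², and set W = Σ_{i=1}^ν (Z_i + m_i)², so that W has the noncentral chi-squared distribution with ν degrees of freedom and noncentrality parameter μ. Then for every real w > μ + ν: P(W > w) ≤ exp( −[ (w + μ)/2 − √( 2w(2μ + ν) − 2μν − ν² ) ] ). (Lemma S2.4, non-asymptotic part: an upper tail bound for noncentral chi-squared random variables obtained by inverting Birgé's deviation inequality.) -/
/-! Chernoff's bound, with the exact moment generating function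
`E exp(t (Z + c)²) = exp(t c² / (1 - 2t)) / √(1 - 2t)` of a shifted squared standard normal, taken
at `t = (1 - r) / 2` with `r = √((μ + ν) / w)` and combined with `log r ≥ 1 - 1/r`, gives
`P(W ≥ w) ≤ exp(-(√w - √(μ + ν))² / 2)`. The stated bound is weaker, because
`√((μ + ν) w) - ν/2 ≤ √(2w(2μ + ν) - 2μν - ν²)` once `w ≥ μ + ν`. -/

open MeasureTheory ProbabilityTheory Real

lemma gaussianPDFReal_mul_exp_mul_add_sq {t : ℝ} (ht : t < 1 / 2) (c z : ℝ) :
    gaussianPDFReal 0 1 z * exp (t * (z + c) ^ 2) =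
      exp (t * c ^ 2 / (1 - 2 * t)) / √(1 - 2 * t) *
        gaussianPDFReal (2 * t * c / (1 - 2 * t)) (1 - 2 * t)⁻¹.toNNReal z := by
  have hs : 0 < 1 - 2 * t := by linarith
  have hexp : -z ^ 2 / 2 + t * (z + c) ^ 2 =
      t * c ^ 2 / (1 - 2 * t) + -(z - 2 * t * c / (1 - 2 * t)) ^ 2 / (2 * (1 - 2 * t)⁻¹) := by
    field_simp
    ring
  simp only [gaussianPDFReal, NNReal.coe_one, Real.coe_toNNReal _ (inv_pos.2 hs).le, sub_zero,
    mul_one, Real.sqrt_mul' _ (inv_pos.2 hs).le, sqrt_inv]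
  rw [mul_assoc, ← exp_add, hexp, exp_add]
  field_simp

lemma integrable_exp_mul_add_sq_gaussianReal {t : ℝ} (ht : t < 1 / 2) (c : ℝ) :
    Integrable (fun z ↦ exp (t * (z + c) ^ 2)) (gaussianReal 0 1) := by
  rw [gaussianReal_of_var_ne_zero 0 one_ne_zero, integrable_withDensity_iff_integrable_smul'
    (measurable_gaussianPDF 0 1) (ae_of_all _ fun _ ↦ gaussianPDF_lt_top)]
  simp only [toReal_gaussianPDF, smul_eq_mul, gaussianPDFReal_mul_exp_mul_add_sq ht]
  exact (integrable_gaussianPDFReal _ _).const_mul _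

lemma mgf_add_sq_gaussianReal {t : ℝ} (ht : t < 1 / 2) (c : ℝ) :
    mgf (fun z ↦ (z + c) ^ 2) (gaussianReal 0 1) t =
      exp (t * c ^ 2 / (1 - 2 * t)) / √(1 - 2 * t) := by
  have hv : (1 - 2 * t)⁻¹.toNNReal ≠ 0 := by
    simp only [ne_eq, Real.toNNReal_eq_zero, not_le, inv_pos]; linarith
  rw [mgf, integral_gaussianReal_eq_integral_smul one_ne_zero]
  simp only [smul_eq_mul, gaussianPDFReal_mul_exp_mul_add_sq ht]
  rw [integral_const_mul, integral_gaussianPDFReal_eq_one _ hv, mul_one]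

lemma exp_one_sub_inv_div_two_le_sqrt {r : ℝ} (hr : 0 < r) : exp ((1 - r⁻¹) / 2) ≤ √r :=
  calc exp ((1 - r⁻¹) / 2) ≤ exp (log r / 2) := by gcongr; exact one_sub_inv_le_log_of_pos hr
    _ = √r := by rw [← log_sqrt hr.le, exp_log (sqrt_pos.2 hr)]

lemma sqrt_mul_sqrt_sub_half_le_sqrt {M ν w : ℝ} (hM : 0 ≤ M) (hν : 0 ≤ ν) (hw : M + ν ≤ w) :
    √(M + ν) * √w - ν / 2 ≤ √(2 * w * (2 * M + ν) - 2 * M * ν - ν ^ 2) := by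
  have hs2 : (√(M + ν) * √w) ^ 2 = (M + ν) * w := by
    rw [mul_pow, sq_sqrt (by linarith), sq_sqrt (by linarith)]
  have hs : M + ν ≤ √(M + ν) * √w :=
    calc M + ν = √(M + ν) * √(M + ν) := (mul_self_sqrt (by linarith)).symm
      _ ≤ √(M + ν) * √w := by gcongr
  refine (le_abs_self _).trans (abs_le_sqrt ?_)
  nlinarith [mul_nonneg (sub_nonneg.2 hw) (by positivity : 0 ≤ 3 * M + ν),
    mul_nonneg hν (sub_nonneg.2 hs)]

namespace ProbabilityTheory

variable {Ω ι : Type*} [MeasurableSpace Ω] {P : Measure Ω} {t : ℝ}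

lemma integrable_exp_mul_add_sq_of_map_eq_gaussianReal {Z : Ω → ℝ} (hZ : AEMeasurable Z P)
    (hlaw : P.map Z = gaussianReal 0 1) (ht : t < 1 / 2) (c : ℝ) :
    Integrable (fun ω ↦ exp (t * (Z ω + c) ^ 2)) P := by
  have h := integrable_exp_mul_add_sq_gaussianReal ht c
  rw [← hlaw, integrable_map_measure (by fun_prop) hZ] at h
  exact h

lemma mgf_add_sq_of_map_eq_gaussianReal {Z : Ω → ℝ} (hZ : AEMeasurable Z P)
    (hlaw : P.map Z = gaussianReal 0 1) (ht : t < 1 / 2) (c : ℝ) :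
    mgf (fun ω ↦ (Z ω + c) ^ 2) P t = exp (t * c ^ 2 / (1 - 2 * t)) / √(1 - 2 * t) := by
  rw [← mgf_add_sq_gaussianReal ht c, ← hlaw, mgf_map hZ (by fun_prop)]
  rfl

variable [Fintype ι] {Z : ι → Ω → ℝ}

lemma iIndepFun.mgf_sum_add_sq (hZ : ∀ i, Measurable (Z i)) (hindep : iIndepFun Z P)
    (hlaw : ∀ i, P.map (Z i) = gaussianReal 0 1) (m : ι → ℝ) (ht : t < 1 / 2) :
    Integrable (fun ω ↦ exp (t * ∑ i, (Z i ω + m i) ^ 2)) P ∧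
      mgf (fun ω ↦ ∑ i, (Z i ω + m i) ^ 2) P t =
        exp (t * (∑ i, m i ^ 2) / (1 - 2 * t)) / √(1 - 2 * t) ^ Fintype.card ι := by
  set X : ι → Ω → ℝ := fun i ω ↦ (Z i ω + m i) ^ 2
  have hX : ∀ i, Measurable (X i) := fun i ↦ by fun_prop
  have hXindep : iIndepFun X P := hindep.comp (fun i z ↦ (z + m i) ^ 2) fun i ↦ by fun_prop
  have hsum : (fun ω ↦ ∑ i, (Z i ω + m i) ^ 2) = ∑ i, X i := by ext; simp [X]
  have := hindep.isProbabilityMeasure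
  refine ⟨?_, ?_⟩
  · simpa [hsum] using hXindep.integrable_exp_mul_sum hX (s := Finset.univ) fun i _ ↦
      integrable_exp_mul_add_sq_of_map_eq_gaussianReal (hZ i).aemeasurable (hlaw i) ht (m i)
  · rw [hsum, hXindep.mgf_sum hX]
    simp only [X, mgf_add_sq_of_map_eq_gaussianReal (hZ _).aemeasurable (hlaw _) ht]
    rw [Finset.prod_div_distrib, ← exp_sum, ← Finset.sum_div, ← Finset.mul_sum, Finset.prod_const,
      Finset.card_univ]


theorem iIndepFun.measureReal_sum_add_sq_ge_le [Nonempty ι] (hZ : ∀ i, Measurable (Z i))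
    (hindep : iIndepFun Z P) (hlaw : ∀ i, P.map (Z i) = gaussianReal 0 1) (m : ι → ℝ) {w : ℝ}
    (hw : ∑ i, m i ^ 2 + Fintype.card ι ≤ w) :
    P.real {ω | w ≤ ∑ i, (Z i ω + m i) ^ 2} ≤
      exp (-(√w - √(∑ i, m i ^ 2 + Fintype.card ι)) ^ 2 / 2) := by
  have := hindep.isProbabilityMeasure
  set M := ∑ i, m i ^ 2
  set n := Fintype.card ι
  have ha : 0 < M + n := by
    have : 0 < n := Fintype.card_pos
    positivity
  have hw0 : 0 < √w := sqrt_pos.2 (ha.trans_le hw)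
  set r := √(M + n) / √w
  have hr : 0 < r := by positivity
  have hr1 : r ≤ 1 := div_le_one_of_le₀ (sqrt_le_sqrt hw) hw0.le
  set t := (1 - r) / 2
  have ht : t < 1 / 2 := by simp only [t]; linarith
  have h2t : 1 - 2 * t = r := by ring
  obtain ⟨hint, hmgf⟩ := hindep.mgf_sum_add_sq hZ hlaw m ht
  calc P.real {ω | w ≤ ∑ i, (Z i ω + m i) ^ 2}
      ≤ exp (-t * w) * mgf (fun ω ↦ ∑ i, (Z i ω + m i) ^ 2) P t :=
        measure_ge_le_exp_mul_mgf w (by simp only [t]; linarith) hint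
    _ = exp (-t * w) * (exp (t * M / r) / √r ^ n) := by rw [hmgf, h2t]
    _ ≤ exp (-t * w) * (exp (t * M / r) / exp ((1 - r⁻¹) / 2) ^ n) := by
        gcongr; exact exp_one_sub_inv_div_two_le_sqrt hr
    _ = exp (-(√w - √(M + n)) ^ 2 / 2) := by
        rw [← exp_nat_mul, ← exp_sub, ← exp_add]
        congr 1
        have hsa := sq_sqrt ha.le
        have hsw := sq_sqrt (ha.trans_le hw).le
        simp only [t, r]
        field_simp
        linear_combination (√w - √(M + n)) * (√(M + n) * hsw - √w * hsa)

end ProbabilityTheory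

/-- **Lemma S2.4 (non-asymptotic part).** If `W = ∑_{i=1}^ν (Z_i + m_i)²` with
`Z_1,…,Z_ν` i.i.d. standard normals and `μ = ‖m‖²` (so `W ~ χ²_ν(μ)`), then for every
`w > μ + ν`: `P(W > w) ≤ exp(−[(w + μ)/2 − √(2w(2μ + ν) − 2μν − ν²)])`. -/
theorem stmt17 {Ω : Type*} [MeasurableSpace Ω] (P : Measure Ω) [IsProbabilityMeasure P]
    (ν : ℕ) (hν : 1 ≤ ν)
    (Z : Fin ν → Ω → ℝ) (hmeas : ∀ i, Measurable (Z i))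
    (hindep : iIndepFun Z P)
    (hlaw : ∀ i, Measure.map (Z i) P = gaussianReal 0 1)
    (m : Fin ν → ℝ) (w : ℝ) (hw : (∑ i, m i ^ 2) + ν < w) :
    (P {ω | w < ∑ i, (Z i ω + m i) ^ 2}).toReal ≤
      Real.exp (-((w + ∑ i, m i ^ 2) / 2 -
        Real.sqrt (2 * w * (2 * (∑ i, m i ^ 2) + ν) -
          2 * (∑ i, m i ^ 2) * ν - (ν : ℝ) ^ 2))) := by
  have : Nonempty (Fin ν) := ⟨⟨0, hν⟩⟩
  have hM : 0 ≤ ∑ i, m i ^ 2 := Finset.sum_nonneg fun i _ ↦ sq_nonneg _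
  have hsqrt := sqrt_mul_sqrt_sub_half_le_sqrt hM ν.cast_nonneg hw.le
  have hw0 : 0 ≤ w := by linarith
  calc (P {ω | w < ∑ i, (Z i ω + m i) ^ 2}).toReal
      ≤ P.real {ω | w ≤ ∑ i, (Z i ω + m i) ^ 2} :=
        measureReal_mono (Set.ofPred_subset_ofPred.2 fun _ ↦ le_of_lt)
    _ ≤ exp (-(√w - √(∑ i, m i ^ 2 + ν)) ^ 2 / 2) := by
        simpa using hindep.measureReal_sum_add_sq_ge_le hmeas hlaw m (by simpa using hw.le)
    _ ≤ _ := by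
        rw [sub_sq, sq_sqrt hw0, sq_sqrt (by positivity)]
        gcongr
        linarith
end
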